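/- arXiv:1911.00319 — 5 statements merged into one kernel-verified Lean document; each statement's English description precedes it below -/
import Mathlib

section
/- Theorem 1, case U⁺₁,>: Assume there exist a > 0, τ > 0 and a continuously differentiable function b : [0,a] → ℝ with b(0) = 0 and b'(x) ≥ τ for all x ∈ [0,a], such that (x, b(x)) ∈ Ĝ for every x ∈ (0,a], and there exists c ∈ (0,a] such that every point (x,y) with 0 < x ≤ c and −c ≤ y < b(x) belongs to G. Then there exist h ∈ (0,c] and a function φ : [0,h] → ℝ with φ(0) = 0 which is a solution of y' = f₀(x,y) with graph in G̃ on [0,h]. -/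
/-!
Near the origin `f₀` is small, say `|f₀| ≤ τ / 2`, so a solution issued from the origin stays in
the cone `|y| ≤ (τ / 2) x`. Because `b' ≥ τ` gives `b x ≥ τ x`, a short piece of this cone lies
below the barrier, hence in `G` except for its vertex `(0, 0) ∈ Ĝ`, and on it `f₀` is continuous
and bounded by the slope of the cone. This is the setting of Peano's theorem, proved here with
Tonelli's delayed approximations `ψ t = ∫₀^(t - ε) f (s, ψ s) ds`: they stay in the cone and are
uniformly Lipschitz, so by Arzelà–Ascoli a subsequence converges, and dominated convergence passes
to the limit in the integral equation.
-/

open Set Filter Topology intervalIntegral BoundedContinuousFunction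
open scoped Interval

namespace Peano

def cone (h M : ℝ) : Set (ℝ × ℝ) := {p | p.1 ∈ Icc 0 h ∧ |p.2| ≤ M * p.1}

def delay (h ε t : ℝ) : ℝ := min (max (t - ε) 0) h

section Delay

variable {h ε t : ℝ}

lemma delay_mem (hh : 0 ≤ h) : delay h ε t ∈ Icc 0 h :=
  ⟨le_min (le_max_right _ _) hh, min_le_right _ _⟩

lemma abs_delay_sub_delay_le (t' : ℝ) : |delay h ε t - delay h ε t'| ≤ |t - t'| :=
  calc |delay h ε t - delay h ε t'| ≤ max |max (t - ε) 0 - max (t' - ε) 0| |h - h| :=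
        abs_min_sub_min_le_max _ _ _ _
    _ = |max (t - ε) 0 - max (t' - ε) 0| := by rw [sub_self, abs_zero, max_eq_left (abs_nonneg _)]
    _ ≤ |(t - ε) - (t' - ε)| := abs_max_sub_max_le_abs _ _ _
    _ = |t - t'| := by ring_nf

lemma delay_le (hε : 0 ≤ ε) (ht : 0 ≤ t) : delay h ε t ≤ t :=
  (min_le_left _ _).trans (max_le (by linarith) ht)

lemma abs_delay_sub_le (hε : 0 ≤ ε) (ht : t ∈ Icc 0 h) : |delay h ε t - t| ≤ ε := by
  have : delay h ε t = max (t - ε) 0 := min_eq_left (max_le (by linarith [ht.2]) (ht.1.trans ht.2))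
  rw [this, abs_le]
  constructor <;> cases max_cases (t - ε) 0 <;> linarith [ht.1]

lemma delay_le_of_le_add {k : ℝ} (hk : 0 ≤ k) (ht : t ≤ k + ε) :
    delay h ε t ≤ k :=
  (min_le_left _ _).trans (max_le (by linarith) hk)

end Delay

structure IsAdmissible (h M : ℝ) (ψ : ℝ → ℝ) : Prop where
  abs_le : ∀ t ∈ Icc 0 h, |ψ t| ≤ M * t
  lipschitz : ∀ t ∈ Icc 0 h, ∀ t' ∈ Icc 0 h, |ψ t - ψ t'| ≤ M * |t - t'|

section Tonelli

variable {h M ε : ℝ} {f : ℝ × ℝ → ℝ} {ψ : ℝ → ℝ}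

lemma IsAdmissible.mem_cone (hψ : IsAdmissible h M ψ) {t : ℝ} (ht : t ∈ Icc 0 h) :
    (t, ψ t) ∈ cone h M :=
  ⟨ht, hψ.abs_le t ht⟩

lemma IsAdmissible.continuousOn (hM : 0 ≤ M) (hψ : IsAdmissible h M ψ) :
    ContinuousOn ψ (Icc 0 h) := by
  refine (LipschitzOnWith.of_dist_le_mul fun t ht t' ht' => ?_).continuousOn (K := M.toNNReal)
  simpa only [Real.dist_eq, Real.coe_toNNReal _ hM] using hψ.lipschitz t ht t' ht'

lemma IsAdmissible.continuousOn_comp (hM : 0 ≤ M) (hfc : ContinuousOn f (cone h M))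
    (hψ : IsAdmissible h M ψ) : ContinuousOn (fun s => f (s, ψ s)) (Icc 0 h) :=
  hfc.comp (continuousOn_id.prodMk (hψ.continuousOn hM)) fun _ => hψ.mem_cone

lemma IsAdmissible.intervalIntegrable (hM : 0 ≤ M) (hfc : ContinuousOn f (cone h M))
    (hψ : IsAdmissible h M ψ) {u v : ℝ} (hu : u ∈ Icc 0 h) (hv : v ∈ Icc 0 h) :
    IntervalIntegrable (fun s => f (s, ψ s)) MeasureTheory.volume u v :=
  ((hψ.continuousOn_comp hM hfc).mono (uIcc_subset_Icc hu hv)).intervalIntegrable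

lemma IsAdmissible.abs_integral_sub_integral_le (hM : 0 ≤ M) (hfc : ContinuousOn f (cone h M))
    (hfb : ∀ p ∈ cone h M, |f p| ≤ M) (hψ : IsAdmissible h M ψ) {u v : ℝ}
    (hu : u ∈ Icc 0 h) (hv : v ∈ Icc 0 h) :
    |(∫ s in (0 : ℝ)..u, f (s, ψ s)) - ∫ s in (0 : ℝ)..v, f (s, ψ s)| ≤ M * |u - v| := by
  have h0 : (0 : ℝ) ∈ Icc 0 h := left_mem_Icc.2 (hu.1.trans hu.2)
  rw [integral_interval_sub_left (hψ.intervalIntegrable hM hfc h0 hu)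
    (hψ.intervalIntegrable hM hfc h0 hv), ← Real.norm_eq_abs, ← Real.norm_eq_abs (u - v)]
  refine norm_integral_le_of_norm_le_const fun s hs => ?_
  exact hfb _ (hψ.mem_cone (uIcc_subset_Icc hv hu (uIoc_subset_uIcc hs)))

noncomputable def tonelliMap (h ε : ℝ) (f : ℝ × ℝ → ℝ) (ψ : ℝ → ℝ) (t : ℝ) : ℝ :=
  ∫ s in (0 : ℝ)..delay h ε t, f (s, ψ s)

lemma IsAdmissible.tonelliMap (hh : 0 ≤ h) (hM : 0 ≤ M) (hfc : ContinuousOn f (cone h M))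
    (hfb : ∀ p ∈ cone h M, |f p| ≤ M) (hε : 0 ≤ ε) (hψ : IsAdmissible h M ψ) :
    IsAdmissible h M (tonelliMap h ε f ψ) := by
  have hint : ∀ t, ∀ v ∈ Icc 0 h, |Peano.tonelliMap h ε f ψ t - ∫ s in (0 : ℝ)..v, f (s, ψ s)| ≤
      M * |delay h ε t - v| := fun t v hv =>
    hψ.abs_integral_sub_integral_le hM hfc hfb (delay_mem hh) hv
  refine ⟨fun t ht => ?_, fun t _ t' _ => ?_⟩
  · have := hint t 0 (left_mem_Icc.2 hh)
    rw [integral_same, sub_zero, sub_zero, abs_of_nonneg (delay_mem hh).1] at this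
    exact this.trans (mul_le_mul_of_nonneg_left (delay_le hε ht.1) hM)
  · exact (hint t _ (delay_mem hh)).trans
      (mul_le_mul_of_nonneg_left (abs_delay_sub_delay_le t') hM)

lemma isAdmissible_iterate_tonelliMap (hh : 0 ≤ h) (hM : 0 ≤ M)
    (hfc : ContinuousOn f (cone h M)) (hfb : ∀ p ∈ cone h M, |f p| ≤ M) (hε : 0 ≤ ε) (k : ℕ) :
    IsAdmissible h M ((tonelliMap h ε f)^[k] 0) := by
  induction k with
  | zero => exact ⟨fun t ht => by simpa using mul_nonneg hM ht.1,
      fun t _ t' _ => by simpa using mul_nonneg hM (abs_nonneg (t - t'))⟩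
  | succ k ih =>
    rw [Function.iterate_succ_apply']
    exact ih.tonelliMap hh hM hfc hfb hε

lemma iterate_tonelliMap_eq_succ (hh : 0 ≤ h) (hε : 0 ≤ ε) (k : ℕ) :
    ∀ t ≤ k * ε, (tonelliMap h ε f)^[k] 0 t = (tonelliMap h ε f)^[k + 1] 0 t := by
  induction k with
  | zero =>
    intro t ht
    have : delay h ε t = 0 :=
      le_antisymm (delay_le_of_le_add le_rfl (by rw [Nat.cast_zero, zero_mul] at ht; linarith))
        (delay_mem hh).1
    simp [tonelliMap, this]
  | succ k ih =>
    intro t ht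
    rw [Function.iterate_succ_apply', Function.iterate_succ_apply' (n := k + 1)]
    refine integral_congr fun s hs => ?_
    rw [uIcc_of_le (delay_mem hh).1] at hs
    have hsk : s ≤ k * ε :=
      hs.2.trans (delay_le_of_le_add (by positivity) (by push_cast at ht; linarith))
    simp only [ih s hsk]

/-- The `(k + 1)`-st iterate of `tonelliMap h ε f` agrees with the `k`-th one on `t ≤ k ε`, so with
`ε = h / (n + 1)` the `(n + 1)`-st iterate is a fixed point on `[0, h]`. -/
noncomputable def tonelliApprox (h : ℝ) (f : ℝ × ℝ → ℝ) (n : ℕ) : ℝ → ℝ :=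
  (tonelliMap h (h / (n + 1)) f)^[n + 1] 0

lemma isAdmissible_tonelliApprox (hh : 0 ≤ h) (hM : 0 ≤ M) (hfc : ContinuousOn f (cone h M))
    (hfb : ∀ p ∈ cone h M, |f p| ≤ M) (n : ℕ) : IsAdmissible h M (tonelliApprox h f n) :=
  isAdmissible_iterate_tonelliMap hh hM hfc hfb (by positivity) (n + 1)

lemma tonelliApprox_eq_tonelliMap (hh : 0 ≤ h) (n : ℕ) {t : ℝ} (ht : t ∈ Icc 0 h) :
    tonelliApprox h f n t = tonelliMap h (h / (n + 1)) f (tonelliApprox h f n) t := by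
  have hth : t ≤ ((n + 1 : ℕ) : ℝ) * (h / (n + 1)) := by
    rw [Nat.cast_succ, mul_div_cancel₀ _ (by positivity)]
    exact ht.2
  rw [tonelliApprox, iterate_tonelliMap_eq_succ hh (by positivity) (n + 1) t hth,
    Function.iterate_succ_apply']

lemma abs_tonelliApprox_sub_integral_le (hh : 0 ≤ h) (hM : 0 ≤ M)
    (hfc : ContinuousOn f (cone h M)) (hfb : ∀ p ∈ cone h M, |f p| ≤ M) (n : ℕ) {x : ℝ}
    (hx : x ∈ Icc 0 h) :
    |tonelliApprox h f n x - ∫ s in (0 : ℝ)..x, f (s, tonelliApprox h f n s)| ≤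
      M * (h / (n + 1)) := by
  rw [tonelliApprox_eq_tonelliMap hh n hx, tonelliMap]
  exact ((isAdmissible_tonelliApprox hh hM hfc hfb n).abs_integral_sub_integral_le hM hfc hfb
    (delay_mem hh) hx).trans
    (mul_le_mul_of_nonneg_left (abs_delay_sub_le (by positivity) hx) hM)

end Tonelli

section Limit

variable {h M : ℝ} {f : ℝ × ℝ → ℝ}

lemma IsAdmissible.exists_tendsto_subseq (hh : 0 ≤ h) (hM : 0 ≤ M) {ψ : ℕ → ℝ → ℝ}
    (hψ : ∀ n, IsAdmissible h M (ψ n)) :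
    ∃ φ, IsAdmissible h M φ ∧ ∃ κ : ℕ → ℕ, StrictMono κ ∧
      ∀ x ∈ Icc 0 h, Tendsto (fun k => ψ (κ k) x) atTop (𝓝 (φ x)) := by
  have : CompactSpace (Icc 0 h) := isCompact_iff_compactSpace.1 isCompact_Icc
  let Ψ : ℕ → Icc 0 h →ᵇ ℝ := fun n => .mkOfCompact
    ⟨fun u => ψ n u, (hψ n).continuousOn hM |>.domRestrict⟩
  have hLip : ∀ n, LipschitzWith M.toNNReal (Ψ n) := fun n => .of_dist_le_mul fun u v => by
    rw [Real.dist_eq, Subtype.dist_eq, Real.dist_eq, Real.coe_toNNReal _ hM]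
    exact (hψ n).lipschitz u u.2 v v.2
  have hbound : ∀ g ∈ range Ψ, ∀ u, g u ∈ Metric.closedBall 0 (M * h) := by
    rintro _ ⟨n, rfl⟩ u
    rw [mem_closedBall_zero_iff, Real.norm_eq_abs]
    exact ((hψ n).abs_le u u.2).trans (mul_le_mul_of_nonneg_left u.2.2 hM)
  have hcpt := BoundedContinuousFunction.arzela_ascoli _ (isCompact_closedBall 0 (M * h))
    (range Ψ) (fun g u hg => hbound g hg u)
    (LipschitzWith.uniformEquicontinuous (fun g : range Ψ => ⇑(g : Icc 0 h →ᵇ ℝ)) M.toNNReal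
      (by rintro ⟨_, n, rfl⟩; exact hLip n)).equicontinuous
  obtain ⟨Φ, -, κ, hκ, hΨΦ⟩ := hcpt.tendsto_subseq fun n => subset_closure (mem_range_self n)
  have hlim : ∀ x (hx : x ∈ Icc 0 h), Tendsto (fun k => ψ (κ k) x) atTop (𝓝 (Φ ⟨x, hx⟩)) :=
    fun x hx => ((continuous_eval_const _).tendsto _).comp hΨΦ
  refine ⟨IccExtend hh Φ, ⟨fun t ht => ?_, fun t ht t' ht' => ?_⟩, κ, hκ, fun x hx => ?_⟩
  · rw [IccExtend_of_mem hh _ ht]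
    exact le_of_tendsto' ((hlim t ht).abs) fun k => (hψ (κ k)).abs_le t ht
  · rw [IccExtend_of_mem hh _ ht, IccExtend_of_mem hh _ ht']
    exact le_of_tendsto' ((hlim t ht).sub (hlim t' ht')).abs
      fun k => (hψ (κ k)).lipschitz t ht t' ht'
  · rw [IccExtend_of_mem hh _ hx]
    exact hlim x hx

lemma tendsto_integral_of_isAdmissible (hM : 0 ≤ M) (hfc : ContinuousOn f (cone h M))
    (hfb : ∀ p ∈ cone h M, |f p| ≤ M) {ψ : ℕ → ℝ → ℝ} {φ : ℝ → ℝ}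
    (hψ : ∀ n, IsAdmissible h M (ψ n)) (hφ : IsAdmissible h M φ)
    (hlim : ∀ x ∈ Icc 0 h, Tendsto (fun n => ψ n x) atTop (𝓝 (φ x))) {x : ℝ}
    (hx : x ∈ Icc 0 h) :
    Tendsto (fun n => ∫ s in (0 : ℝ)..x, f (s, ψ n s)) atTop
      (𝓝 (∫ s in (0 : ℝ)..x, f (s, φ s))) := by
  have hsub : Ι 0 x ⊆ Icc 0 h :=
    uIoc_subset_uIcc.trans (uIcc_subset_Icc (left_mem_Icc.2 (hx.1.trans hx.2)) hx)
  refine tendsto_integral_filter_of_dominated_convergence (fun _ => M)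
    (Eventually.of_forall fun n => ?_)
    (Eventually.of_forall fun n => MeasureTheory.ae_of_all _ fun s hs =>
      hfb _ ((hψ n).mem_cone (hsub hs)))
    intervalIntegrable_const
    (MeasureTheory.ae_of_all _ fun s hs => ?_)
  · exact ((hψ n).continuousOn_comp hM hfc).aestronglyMeasurable measurableSet_Icc
      |>.mono_measure (MeasureTheory.Measure.restrict_mono hsub le_rfl)
  · refine (hfc _ (hφ.mem_cone (hsub hs))).tendsto.comp (tendsto_nhdsWithin_iff.2 ⟨?_, ?_⟩)
    · exact tendsto_const_nhds.prodMk_nhds (hlim s (hsub hs))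
    · exact Eventually.of_forall fun n => (hψ n).mem_cone (hsub hs)

end Limit

lemma hasDerivWithinAt_of_eq_integral {φ F : ℝ → ℝ} {a b x : ℝ}
    (hF : ContinuousOn F (Icc a b)) (hφ : ∀ y ∈ Icc a b, φ y = ∫ s in a..y, F s)
    (hx : x ∈ Icc a b) : HasDerivWithinAt φ (F x) (Icc a b) x := by
  have := Fact.mk hx
  exact (integral_hasDerivWithinAt_right
    ((hF.mono (Icc_subset_Icc le_rfl hx.2)).intervalIntegrable_of_Icc hx.1)
    (hF.stronglyMeasurableAtFilter_nhdsWithin measurableSet_Icc x)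
    (hF.continuousWithinAt hx)).congr hφ (hφ x hx)

theorem exists_hasDerivWithinAt_of_continuousOn_cone {h M : ℝ} {f : ℝ × ℝ → ℝ} (hh : 0 ≤ h)
    (hM : 0 ≤ M) (hfc : ContinuousOn f (cone h M)) (hfb : ∀ p ∈ cone h M, |f p| ≤ M) :
    ∃ φ : ℝ → ℝ, φ 0 = 0 ∧ ∀ x ∈ Icc 0 h, |φ x| ≤ M * x ∧
      HasDerivWithinAt φ (f (x, φ x)) (Icc 0 h) x := by
  have hψ := isAdmissible_tonelliApprox hh hM hfc hfb
  obtain ⟨φ, hφ, κ, hκ, hlim⟩ := IsAdmissible.exists_tendsto_subseq hh hM hψ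
  have hint : ∀ x ∈ Icc 0 h, φ x = ∫ s in (0 : ℝ)..x, f (s, φ s) := by
    intro x hx
    have hdelay : Tendsto (fun n : ℕ => M * (h / (n + 1))) atTop (𝓝 0) := by
      simpa [div_eq_mul_inv, mul_assoc] using
        tendsto_one_div_add_atTop_nhds_zero_nat.const_mul (M * h)
    have herr : Tendsto (fun k => tonelliApprox h f (κ k) x -
        ∫ s in (0 : ℝ)..x, f (s, tonelliApprox h f (κ k) s)) atTop (𝓝 0) :=
      squeeze_zero_norm (fun k => abs_tonelliApprox_sub_integral_le hh hM hfc hfb (κ k) hx)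
        (hdelay.comp hκ.tendsto_atTop)
    have hsub := (hlim x hx).sub
      (tendsto_integral_of_isAdmissible hM hfc hfb (fun k => hψ (κ k)) hφ hlim hx)
    exact sub_eq_zero.1 (tendsto_nhds_unique hsub herr)
  refine ⟨φ, abs_nonpos_iff.1 (by simpa using hφ.abs_le 0 (left_mem_Icc.2 hh)), fun x hx =>
    ⟨hφ.abs_le x hx, hasDerivWithinAt_of_eq_integral (hφ.continuousOn_comp hM hfc) hint hx⟩⟩

lemma norm_le_of_mem_cone {h M : ℝ} {p : ℝ × ℝ} (hp : p ∈ cone h M) : ‖p‖ ≤ max 1 M * h := by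
  obtain ⟨⟨hx0, hxh⟩, hy⟩ := hp
  rw [Prod.norm_def, Real.norm_of_nonneg hx0, Real.norm_eq_abs]
  refine max_le ?_ ?_
  · exact (le_mul_of_one_le_left hx0 (le_max_left 1 M)).trans
      (mul_le_mul_of_nonneg_left hxh (by positivity))
  · exact hy.trans ((mul_le_mul_of_nonneg_right (le_max_right 1 M) hx0).trans
      (mul_le_mul_of_nonneg_left hxh (by positivity)))

lemma cone_subset_union {G Ghat : Set (ℝ × ℝ)} {b : ℝ → ℝ} {c h M τ : ℝ}
    (hO : ((0 : ℝ), (0 : ℝ)) ∈ Ghat)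
    (hin : ∀ x y : ℝ, 0 < x → x ≤ c → -c ≤ y → y < b x → (x, y) ∈ G)
    (hb : ∀ x ∈ Ioc 0 h, τ * x ≤ b x) (hMτ : M < τ) (hhc : h ≤ c) (hMhc : M * h ≤ c) :
    cone h M ⊆ G ∪ Ghat := by
  rintro ⟨x, y⟩ ⟨⟨hx0, hxh⟩, hy⟩
  rcases hx0.eq_or_lt with rfl | hx
  · rw [mul_zero, abs_nonpos_iff] at hy
    exact Or.inr (hy ▸ hO)
  have hM : 0 ≤ M := le_of_mul_le_mul_right (by simpa using (abs_nonneg y).trans hy) hx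
  have hyc : |y| ≤ c := hy.trans ((mul_le_mul_of_nonneg_left hxh hM).trans hMhc)
  refine Or.inl (hin x y hx (hxh.trans hhc) (neg_le_of_abs_le hyc) ?_)
  calc y ≤ M * x := (le_abs_self y).trans hy
    _ < τ * x := mul_lt_mul_of_pos_right hMτ hx
    _ ≤ b x := hb x ⟨hx, hxh⟩

end Peano

lemma add_mul_sub_le_of_hasDerivWithinAt {b b' : ℝ → ℝ} {l u τ : ℝ}
    (hderiv : ∀ x ∈ Icc l u, HasDerivWithinAt b (b' x) (Icc l u) x)
    (hτ : ∀ x ∈ Icc l u, τ ≤ b' x) {x : ℝ} (hx : x ∈ Icc l u) : b l + τ * (x - l) ≤ b x := by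
  have hmono : MonotoneOn (fun x => b x - τ * x) (Icc l u) := by
    refine monotoneOn_of_hasDerivWithinAt_nonneg (f' := fun y => b' y - τ) (convex_Icc l u)
      (fun y hy => ((hderiv y hy).continuousWithinAt.sub (continuousWithinAt_const.mul
        continuousWithinAt_id))) (fun y hy => ?_) (fun y hy => ?_)
    · exact (((hderiv y (interior_subset hy)).fun_sub
        ((hasDerivWithinAt_id y _).const_mul τ)).mono interior_subset).congr_deriv (by ring)
    · simpa using hτ y (interior_subset hy)
  have := hmono (left_mem_Icc.2 (hx.1.trans hx.2)) hx hx.1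
  simp only at this
  linarith

theorem theorem1_case_U1_gt_general
    (G Ghat : Set (ℝ × ℝ))
    (f₀ : ℝ × ℝ → ℝ) (hf : ContinuousOn f₀ (G ∪ Ghat))
    (hO : ((0 : ℝ), (0 : ℝ)) ∈ Ghat) (hf0 : f₀ (0, 0) = 0)
    (a τ : ℝ) (hτ : 0 < τ)
    (b b' : ℝ → ℝ)
    (hderiv : ∀ x ∈ Icc (0 : ℝ) a, HasDerivWithinAt b (b' x) (Icc (0 : ℝ) a) x)
    (hb0 : b 0 = 0)
    (hb'τ : ∀ x ∈ Icc (0 : ℝ) a, τ ≤ b' x)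
    (c : ℝ) (hc : c ∈ Ioc (0 : ℝ) a)
    (hin : ∀ x y : ℝ, 0 < x → x ≤ c → -c ≤ y → y < b x → (x, y) ∈ G) :
    ∃ h ∈ Ioc (0 : ℝ) c, ∃ φ : ℝ → ℝ, φ 0 = 0 ∧
      ∀ x ∈ Icc (0 : ℝ) h, (x, φ x) ∈ G ∪ Ghat ∧
        HasDerivWithinAt φ (f₀ (x, φ x)) (Icc (0 : ℝ) h) x := by
  have hb : ∀ x ∈ Ioc 0 c, τ * x ≤ b x := fun x hx => by
    simpa [hb0] using add_mul_sub_le_of_hasDerivWithinAt hderiv hb'τ ⟨hx.1.le, hx.2.trans hc.2⟩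
  obtain ⟨r, hr, hfr⟩ := Metric.continuousWithinAt_iff.1 (hf _ (Or.inr hO)) (τ / 2) (by positivity)
  -- `max 1 (τ / 2) * h = ρ` keeps the cone inside `[0, c] × [-c, c]` and the ball of radius `r`.
  set ρ := min c (r / 2)
  have hρ : 0 < ρ := lt_min hc.1 (by positivity)
  set h := ρ / max 1 (τ / 2)
  have hMh : max 1 (τ / 2) * h = ρ := mul_div_cancel₀ _ (by positivity)
  have hh : 0 < h := by positivity
  have hhc : h ≤ c := (div_le_self hρ.le (le_max_left _ _)).trans (min_le_left _ _)
  have hcone : Peano.cone h (τ / 2) ⊆ G ∪ Ghat :=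
    Peano.cone_subset_union hO hin (fun x hx => hb x ⟨hx.1, hx.2.trans hhc⟩) (half_lt_self hτ)
      hhc ((mul_le_mul_of_nonneg_right (le_max_right _ _) hh.le).trans
        (hMh.le.trans (min_le_left _ _)))
  have hbound : ∀ p ∈ Peano.cone h (τ / 2), |f₀ p| ≤ τ / 2 := fun p hp => by
    have hpr : dist p (0, 0) < r := by
      rw [Prod.mk_zero_zero, dist_zero_right]
      exact (Peano.norm_le_of_mem_cone hp).trans_lt
        ((hMh.le.trans (min_le_right _ _)).trans_lt (half_lt_self hr))
    simpa [hf0, Real.dist_eq] using (hfr (hcone hp) hpr).le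
  obtain ⟨φ, hφ0, hφ⟩ :=
    Peano.exists_hasDerivWithinAt_of_continuousOn_cone hh.le (by positivity) (hf.mono hcone) hbound
  exact ⟨h, ⟨hh, hhc⟩, φ, hφ0, fun x hx => ⟨hcone ⟨hx, (hφ x hx).1⟩, (hφ x hx).2⟩⟩

/-- Theorem 1, case U⁺₁,>. -/
theorem theorem1_case_U1_gt
    (G Ghat : Set (ℝ × ℝ)) (hGopen : IsOpen G) (hGhat : Ghat ⊆ frontier G)
    (f₀ : ℝ × ℝ → ℝ) (hf : ContinuousOn f₀ (G ∪ Ghat))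
    (hO : ((0 : ℝ), (0 : ℝ)) ∈ Ghat) (hf0 : f₀ (0, 0) = 0)
    (a τ : ℝ) (ha : 0 < a) (hτ : 0 < τ)
    (b b' : ℝ → ℝ)
    (hderiv : ∀ x ∈ Icc (0 : ℝ) a, HasDerivWithinAt b (b' x) (Icc (0 : ℝ) a) x)
    (hb'cont : ContinuousOn b' (Icc (0 : ℝ) a))
    (hb0 : b 0 = 0)
    (hb'τ : ∀ x ∈ Icc (0 : ℝ) a, τ ≤ b' x)
    (hcurve : ∀ x ∈ Ioc (0 : ℝ) a, (x, b x) ∈ Ghat)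
    (c : ℝ) (hc : c ∈ Ioc (0 : ℝ) a)
    (hin : ∀ x y : ℝ, 0 < x → x ≤ c → -c ≤ y → y < b x → (x, y) ∈ G) :
    ∃ h ∈ Ioc (0 : ℝ) c, ∃ φ : ℝ → ℝ, φ 0 = 0 ∧
      ∀ x ∈ Icc (0 : ℝ) h, (x, φ x) ∈ G ∪ Ghat ∧
        HasDerivWithinAt φ (f₀ (x, φ x)) (Icc (0 : ℝ) h) x :=
  theorem1_case_U1_gt_general G Ghat f₀ hf hO hf0 a τ hτ b b' hderiv hb0 hb'τ c hc hin
end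

section
/- Theorem 1, case U⁺₁,₌: Assume there exist a > 0 and a continuously differentiable function b : [0,a] → ℝ with b(0) = 0, b'(0) = 0, b convex on [0,a], such that (x, b(x)) ∈ Ĝ for every x ∈ (0,a], the boundary condition (5⁺ᵤ) holds: f₀(x, b(x)) ≤ b'(x) for all x ∈ (0,a], and there exists c ∈ (0,a] such that every point (x,y) with 0 < x ≤ c and −c ≤ y < b(x) belongs to G. Then there exist h ∈ (0,c] and a function φ : [0,h] → ℝ with φ(0) = 0 which is a solution of y' = f₀(x,y) with graph in G̃ on [0,h]. -/
/-!
Near the origin, freeze `f₀` outside the strip `b x - x ≤ y ≤ b x`, `0 ≤ x ≤ h`, by composing it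
with a retraction of the plane onto the strip. For small `h` the frozen field is bounded by `1/2`
and uniformly continuous, so Peano's theorem gives a solution `φ` with `|φ x| ≤ x / 2`. Since
also `|b x| ≤ x / 2`, `φ` stays above the lower edge of the strip; it stays below `b`, because on
and above the graph of `b` the frozen field is `f₀ (x, b x) ≤ b' x`. So the graph of `φ` lies in
the strip, which is contained in `G ∪ Ĝ` and on which the frozen field is `f₀` itself.

Peano's theorem is proved by monotone approximation: the Pasch–Hausdorff envelopes of the field
in `y` are Lipschitz in `y` and increase uniformly to it, so their Picard–Lindelöf solutions
increase by the comparison principle, and the limit solves the integral equation by dominated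
convergence.
-/

open Set Filter Topology intervalIntegral
open scoped NNReal

theorem exists_pos_forall_abs_lt {X : Type*} [PseudoMetricSpace X] {f : X → ℝ} {s : Set X}
    {x₀ : X} (hf : ContinuousWithinAt f s x₀) (h0 : f x₀ = 0) {ε : ℝ} (hε : 0 < ε) :
    ∃ δ > 0, ∀ x ∈ s, dist x x₀ < δ → |f x| < ε := by
  obtain ⟨δ, hδ, hfδ⟩ := Metric.continuousWithinAt_iff.mp hf ε hε
  exact ⟨δ, hδ, fun x hx hxδ => by simpa [h0, Real.dist_eq] using hfδ hx hxδ⟩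

theorem abs_le_mul_of_hasDerivWithinAt {f f' : ℝ → ℝ} {h M : ℝ}
    (hf : ∀ x ∈ Icc 0 h, HasDerivWithinAt f (f' x) (Icc 0 h) x) (hM : ∀ x ∈ Icc 0 h, |f' x| ≤ M)
    (h0 : f 0 = 0) {x : ℝ} (hx : x ∈ Icc 0 h) : |f x| ≤ M * x := by
  simpa [h0, abs_of_nonneg hx.1] using (convex_Icc 0 h).norm_image_sub_le_of_norm_hasDerivWithin_le
    hf hM ⟨le_rfl, hx.1.trans hx.2⟩ hx

theorem nonpos_of_hasDerivWithinAt_le_mul {f f' : ℝ → ℝ} {p q L : ℝ}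
    (hf : ∀ x ∈ Icc p q, HasDerivWithinAt f (f' x) (Icc p q) x) (hp : f p ≤ 0)
    (hf' : ∀ x ∈ Ico p q, 0 < f x → f' x ≤ L * f x) {x : ℝ} (hx : x ∈ Icc p q) : f x ≤ 0 := by
  refine le_of_forall_pos_le_add fun ε hε => ?_
  -- compare with the barrier `ε e^{(L+1)(t-x)}`, which solves `B' = (L + 1) B > L B`
  set B : ℝ → ℝ := fun t => ε * Real.exp ((L + 1) * (t - x))
  have hB : ∀ t, HasDerivAt B ((L + 1) * B t) t := fun t =>
    ((((hasDerivAt_id t).sub_const x).const_mul (L + 1)).exp.const_mul ε).congr_deriv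
      (by simp only [B, id]; ring)
  have hBpos : ∀ t, 0 < B t := fun t => mul_pos hε (Real.exp_pos _)
  have key := image_le_of_deriv_right_lt_deriv_boundary
    (fun t ht => (hf t ht).continuousWithinAt)
    (fun t ht => (hf t (Ico_subset_Icc_self ht)).mono_of_mem_nhdsWithin (Icc_mem_nhdsGE_of_mem ht))
    (hp.trans (hBpos p).le) hB
    (fun t ht hft => by
      have := hf' t ht (hft ▸ hBpos t)
      rw [hft] at this
      linarith [hBpos t]) hx
  simpa [B] using key

theorem le_of_hasDerivWithinAt_of_le_add_mul {F G : ℝ → ℝ → ℝ} {φ ψ : ℝ → ℝ} {L p q : ℝ}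
    (hφ : ∀ t ∈ Icc p q, HasDerivWithinAt φ (F t (φ t)) (Icc p q) t)
    (hψ : ∀ t ∈ Icc p q, HasDerivWithinAt ψ (G t (ψ t)) (Icc p q) t)
    (hFG : ∀ t y, F t y ≤ G t y) (hG : ∀ t y y', G t y ≤ G t y' + L * |y - y'|)
    (hp : φ p ≤ ψ p) {t : ℝ} (ht : t ∈ Icc p q) : φ t ≤ ψ t := by
  have := nonpos_of_hasDerivWithinAt_le_mul (f := fun t => φ t - ψ t)
    (fun t ht => (hφ t ht).sub (hψ t ht)) (sub_nonpos.mpr hp) (L := L) (fun t _ hpos => by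
      have := hG t (φ t) (ψ t)
      rw [abs_of_pos hpos] at this
      linarith [hFG t (φ t)]) ht
  exact sub_nonpos.mp this

theorem hasDerivWithinAt_Icc_of_eq_integral {f φ : ℝ → ℝ} {a b x : ℝ}
    (hf : ContinuousOn f (Icc a b)) (hφ : ∀ y ∈ Icc a b, φ y = φ a + ∫ t in a..y, f t)
    (hx : x ∈ Icc a b) : HasDerivWithinAt φ (f x) (Icc a b) x := by
  have : Fact (x ∈ Icc a b) := ⟨hx⟩
  exact ((integral_hasDerivWithinAt_right (s := Icc a b) (t := Icc a b)
    ((hf.mono (Icc_subset_Icc le_rfl hx.2)).intervalIntegrable_of_Icc hx.1)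
    (hf.stronglyMeasurableAtFilter_nhdsWithin measurableSet_Icc x)
    (hf x hx)).const_add (φ a)).congr hφ (hφ x hx)

theorem eq_integral_of_hasDerivWithinAt {f φ : ℝ → ℝ} {a b x : ℝ}
    (hφ : ∀ y ∈ Icc a b, HasDerivWithinAt φ (f y) (Icc a b) y) (hf : ContinuousOn f (Icc a b))
    (hx : x ∈ Icc a b) : φ x = φ a + ∫ t in a..x, f t := by
  have hsub : Icc a x ⊆ Icc a b := Icc_subset_Icc le_rfl hx.2
  rw [integral_eq_sub_of_hasDeriv_right_of_le hx.1
    (fun y hy => (hφ y (hsub hy)).continuousWithinAt.mono hsub)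
    (fun y hy => (hφ y (hsub (Ioo_subset_Icc_self hy))).mono_of_mem_nhdsWithin
      (Icc_mem_nhdsGT_of_mem ⟨hy.1.le, hy.2.trans_le hx.2⟩))
    ((hf.mono hsub).intervalIntegrable_of_Icc hx.1)]
  ring

theorem exists_hasDerivWithinAt_of_lipschitzWith {F : ℝ → ℝ → ℝ} {K : ℝ≥0} {M h : ℝ}
    (hh : 0 ≤ h) (hcont : ∀ y, Continuous (F · y)) (hlip : ∀ t, LipschitzWith K (F t))
    (hM : ∀ t y, |F t y| ≤ M) :
    ∃ φ : ℝ → ℝ, φ 0 = 0 ∧ ∀ t ∈ Icc 0 h, HasDerivWithinAt φ (F t (φ t)) (Icc 0 h) t := by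
  have hPL : IsPicardLindelof F (tmin := 0) (tmax := h) ⟨0, le_rfl, hh⟩ 0
      (M.toNNReal * h.toNNReal) 0 M.toNNReal K :=
    { lipschitzOnWith := fun t _ => (hlip t).lipschitzOnWith
      continuousOn := fun y _ => (hcont y).continuousOn
      norm_le := fun t _ y _ => (hM t y).trans (Real.le_coe_toNNReal M)
      mul_max_le := by simp [max_eq_left hh] }
  exact hPL.exists_eq_forall_mem_Icc_hasDerivWithinAt₀

/-- The Pasch–Hausdorff envelope: for `k ≥ 0` and `u` bounded below, the largest `k`-Lipschitz
minorant of `u`. -/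
noncomputable def lipschitzEnvelope (u : ℝ → ℝ) (k y : ℝ) : ℝ :=
  ⨅ z, u z + k * |y - z|

namespace lipschitzEnvelope

variable {u v : ℝ → ℝ} {k : ℝ}

theorem bddBelow_range (hu : BddBelow (range u)) (hk : 0 ≤ k) (y : ℝ) :
    BddBelow (range fun z => u z + k * |y - z|) := by
  obtain ⟨m, hm⟩ := hu
  refine ⟨m, ?_⟩
  rintro _ ⟨z, rfl⟩
  have := hm (mem_range_self z)
  have : 0 ≤ k * |y - z| := by positivity
  linarith

theorem le_self (hu : BddBelow (range u)) (hk : 0 ≤ k) (y : ℝ) :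
    lipschitzEnvelope u k y ≤ u y :=
  (ciInf_le (bddBelow_range hu hk y) y).trans_eq (by simp)

theorem le_of_forall_le {m : ℝ} (hm : ∀ z, m ≤ u z) (hk : 0 ≤ k) (y : ℝ) :
    m ≤ lipschitzEnvelope u k y :=
  le_ciInf fun z => by
    have : 0 ≤ k * |y - z| := by positivity
    linarith [hm z]

theorem abs_le_of_forall_abs_le {M : ℝ} (hu : ∀ z, |u z| ≤ M) (hk : 0 ≤ k) (y : ℝ) :
    |lipschitzEnvelope u k y| ≤ M := by
  have hbdd : BddBelow (range u) := ⟨-M, by rintro _ ⟨z, rfl⟩; exact (_root_.abs_le.mp (hu z)).1⟩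
  rw [_root_.abs_le]
  exact ⟨le_of_forall_le (fun z => (_root_.abs_le.mp (hu z)).1) hk y,
    (le_self hbdd hk y).trans (_root_.abs_le.mp (hu y)).2⟩

theorem mono (hu : BddBelow (range u)) (hk : 0 ≤ k) {k' : ℝ} (hkk' : k ≤ k') (y : ℝ) :
    lipschitzEnvelope u k y ≤ lipschitzEnvelope u k' y :=
  le_ciInf fun z => (ciInf_le (bddBelow_range hu hk y) z).trans (by gcongr)

theorem le_add_mul (hu : BddBelow (range u)) (hk : 0 ≤ k) (y y' : ℝ) :
    lipschitzEnvelope u k y ≤ lipschitzEnvelope u k y' + k * |y - y'| := by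
  rw [← sub_le_iff_le_add]
  refine le_ciInf fun z => sub_le_iff_le_add.mpr <| (ciInf_le (bddBelow_range hu hk y) z).trans ?_
  have : |y - z| ≤ |y' - z| + |y - y'| := by
    simpa [add_comm] using abs_sub_le y y' z
  nlinarith

theorem lipschitzWith (hu : BddBelow (range u)) (k : ℝ≥0) :
    LipschitzWith k (lipschitzEnvelope u k) :=
  LipschitzWith.of_le_add_mul k fun y y' => by
    simpa [Real.dist_eq] using le_add_mul hu k.2 y y'

theorem le_add_of_le_add (hu : BddBelow (range u)) (hk : 0 ≤ k) {ε : ℝ} (huv : ∀ z, u z ≤ v z + ε)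
    (y : ℝ) : lipschitzEnvelope u k y ≤ lipschitzEnvelope v k y + ε := by
  rw [← sub_le_iff_le_add]
  exact le_ciInf fun z => sub_le_iff_le_add.mpr <|
    (ciInf_le (bddBelow_range hu hk y) z).trans (by linarith [huv z])

/-- Since `u` is bounded, far-away points cannot lower the infimum once `k δ ≥ 2 M`. -/
theorem sub_le_of_forall_abs_sub_lt {M δ ε : ℝ} (hu : ∀ z, |u z| ≤ M) (hk : 0 ≤ k)
    (hkδ : 2 * M ≤ k * δ) (hε : 0 ≤ ε) {y : ℝ} (hδ : ∀ z, |y - z| < δ → u y - ε ≤ u z) :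
    u y - ε ≤ lipschitzEnvelope u k y := by
  refine le_ciInf fun z => ?_
  have hkz : 0 ≤ k * |y - z| := by positivity
  by_cases hyz : |y - z| < δ
  · linarith [hδ z hyz]
  · have : k * δ ≤ k * |y - z| := by gcongr; linarith
    linarith [(_root_.abs_le.mp (hu z)).1, (_root_.abs_le.mp (hu y)).2]

end lipschitzEnvelope

noncomputable def lipschitzApprox (g : ℝ × ℝ → ℝ) (n : ℕ) (p : ℝ × ℝ) : ℝ :=
  lipschitzEnvelope (fun z => g (p.1, z)) (n + 1) p.2

namespace lipschitzApprox

variable {g : ℝ × ℝ → ℝ} {M : ℝ}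

theorem bddBelow_range (hgM : ∀ p, |g p| ≤ M) (x : ℝ) : BddBelow (range fun z => g (x, z)) :=
  ⟨-M, by rintro _ ⟨z, rfl⟩; exact (abs_le.mp (hgM (x, z))).1⟩

theorem abs_le_of_forall_abs_le (hgM : ∀ p, |g p| ≤ M) (n : ℕ) (p : ℝ × ℝ) :
    |lipschitzApprox g n p| ≤ M :=
  lipschitzEnvelope.abs_le_of_forall_abs_le (fun z => hgM (p.1, z)) (by positivity) p.2

theorem le_self (hgM : ∀ p, |g p| ≤ M) (n : ℕ) (p : ℝ × ℝ) : lipschitzApprox g n p ≤ g p :=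
  lipschitzEnvelope.le_self (bddBelow_range hgM p.1) (by positivity) p.2

theorem le_succ (hgM : ∀ p, |g p| ≤ M) (n : ℕ) (p : ℝ × ℝ) :
    lipschitzApprox g n p ≤ lipschitzApprox g (n + 1) p :=
  lipschitzEnvelope.mono (bddBelow_range hgM p.1) (by positivity) (by push_cast; linarith) p.2

theorem le_add_mul (hgM : ∀ p, |g p| ≤ M) (n : ℕ) (x y y' : ℝ) :
    lipschitzApprox g n (x, y) ≤ lipschitzApprox g n (x, y') + (n + 1) * |y - y'| :=
  lipschitzEnvelope.le_add_mul (bddBelow_range hgM x) (by positivity) y y'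

theorem lipschitzWith (hgM : ∀ p, |g p| ≤ M) (n : ℕ) (x : ℝ) :
    LipschitzWith (n + 1) fun y => lipschitzApprox g n (x, y) := by
  convert lipschitzEnvelope.lipschitzWith (bddBelow_range hgM x) (n + 1) using 2
  simp [lipschitzApprox]

theorem uniformContinuous (hg : UniformContinuous g) (hgM : ∀ p, |g p| ≤ M) (n : ℕ) :
    UniformContinuous (lipschitzApprox g n) := by
  refine Metric.uniformContinuous_iff.mpr fun ε hε => ?_
  obtain ⟨δ, hδ, hgδ⟩ := Metric.uniformContinuous_iff.mp hg (ε / 2) (half_pos hε)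
  have hn : (0 : ℝ) < n + 1 := by positivity
  have side : ∀ p q : ℝ × ℝ, dist p q < min δ (ε / (2 * (n + 1))) →
      lipschitzApprox g n p < lipschitzApprox g n q + ε := by
    rintro ⟨x, y⟩ ⟨x', y'⟩ hpq
    rw [Prod.dist_eq, max_lt_iff, lt_min_iff, lt_min_iff] at hpq
    have hshift : lipschitzApprox g n (x, y) ≤ lipschitzApprox g n (x', y) + ε / 2 :=
      lipschitzEnvelope.le_add_of_le_add (bddBelow_range hgM x) hn.le (fun z => by
        have := hgδ (show dist (x, z) (x', z) < δ by simpa [Prod.dist_eq] using hpq.1.1)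
        linarith [(abs_sub_lt_iff.mp (Real.dist_eq _ _ ▸ this)).1]) y
    have hmove := le_add_mul hgM n x' y y'
    have hsmall : (n + 1) * |y - y'| < ε / 2 := by
      rw [← Real.dist_eq]
      calc (n + 1) * dist y y' < (n + 1) * (ε / (2 * (n + 1))) := by gcongr; exact hpq.2.2
        _ = ε / 2 := by field_simp
    linarith
  refine ⟨min δ (ε / (2 * (n + 1))), lt_min hδ (by positivity), fun {p q} hpq => ?_⟩
  rw [Real.dist_eq, abs_sub_lt_iff]
  constructor <;> linarith [side p q hpq, side q p (dist_comm p q ▸ hpq)]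

theorem tendstoUniformly (hg : UniformContinuous g) (hgM : ∀ p, |g p| ≤ M) :
    TendstoUniformly (lipschitzApprox g) g atTop := by
  refine Metric.tendstoUniformly_iff.mpr fun ε hε => ?_
  obtain ⟨δ, hδ, hgδ⟩ := Metric.uniformContinuous_iff.mp hg (ε / 2) (half_pos hε)
  obtain ⟨N, hN⟩ := exists_nat_ge (2 * M / δ)
  filter_upwards [eventually_ge_atTop N] with n hn
  rintro ⟨x, y⟩
  have hkδ : 2 * M ≤ (n + 1) * δ := by
    rw [div_le_iff₀ hδ] at hN
    have : (N : ℝ) ≤ n := by exact_mod_cast hn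
    nlinarith
  have hlow : g (x, y) - ε / 2 ≤ lipschitzApprox g n (x, y) :=
    lipschitzEnvelope.sub_le_of_forall_abs_sub_lt (fun z => hgM (x, z)) (by positivity) hkδ
      (by positivity) fun z hz => by
        have := hgδ (show dist (x, y) (x, z) < δ by simpa [Prod.dist_eq, Real.dist_eq] using hz)
        linarith [(abs_sub_lt_iff.mp (Real.dist_eq _ _ ▸ this)).1]
  rw [Real.dist_eq, abs_sub_lt_iff]
  constructor <;> linarith [le_self hgM n (x, y)]

end lipschitzApprox

theorem hasDerivWithinAt_of_tendsto_of_hasDerivWithinAt {F : ℕ → ℝ × ℝ → ℝ} {g : ℝ × ℝ → ℝ}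
    {φ : ℕ → ℝ → ℝ} {ψ : ℝ → ℝ} {M h : ℝ} (hF : ∀ n, Continuous (F n))
    (hFM : ∀ n p, |F n p| ≤ M) (hFg : TendstoUniformly F g atTop)
    (hφ : ∀ n, ∀ x ∈ Icc 0 h, HasDerivWithinAt (φ n) (F n (x, φ n x)) (Icc 0 h) x)
    (hφψ : ∀ x ∈ Icc 0 h, Tendsto (fun n => φ n x) atTop (𝓝 (ψ x)))
    (hψ : ContinuousOn ψ (Icc 0 h)) {x : ℝ} (hx : x ∈ Icc 0 h) :
    HasDerivWithinAt ψ (g (x, ψ x)) (Icc 0 h) x := by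
  have hg : Continuous g := hFg.continuous (Frequently.of_forall hF)
  have hFφ : ∀ n, ContinuousOn (fun t => F n (t, φ n t)) (Icc 0 h) := fun n =>
    (hF n).comp_continuousOn
      (continuousOn_id.prodMk fun t ht => (hφ n t ht).continuousWithinAt)
  have h0 : (0 : ℝ) ∈ Icc 0 h := ⟨le_rfl, hx.1.trans hx.2⟩
  refine hasDerivWithinAt_Icc_of_eq_integral
    (hg.comp_continuousOn (continuousOn_id.prodMk hψ)) (fun y hy => ?_) hx
  have hsub : uIoc 0 y ⊆ Icc 0 h := by
    rw [uIoc_of_le hy.1]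
    exact Ioc_subset_Icc_self.trans (Icc_subset_Icc le_rfl hy.2)
  have hint : (fun n => φ n y) = fun n => φ n 0 + ∫ t in 0..y, F n (t, φ n t) :=
    funext fun n => eq_integral_of_hasDerivWithinAt (hφ n) (hFφ n) hy
  refine tendsto_nhds_unique (hφψ y hy) (hint ▸ (hφψ 0 h0).add ?_)
  refine tendsto_integral_filter_of_dominated_convergence (fun _ => M)
    (Eventually.of_forall fun n => ((hFφ n).mono hsub).aestronglyMeasurable measurableSet_uIoc)
    (Eventually.of_forall fun n => MeasureTheory.ae_of_all _ fun t _ => hFM n _)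
    intervalIntegrable_const
    (MeasureTheory.ae_of_all _ fun t ht => ?_)
  exact hFg.tendsto_comp hg.continuousAt (tendsto_const_nhds.prodMk_nhds (hφψ t (hsub ht)))

theorem exists_monotone_hasDerivWithinAt_lipschitzApprox {g : ℝ × ℝ → ℝ}
    (hg : UniformContinuous g) {M h : ℝ} (hgM : ∀ p, |g p| ≤ M) (hh : 0 ≤ h) :
    ∃ φ : ℕ → ℝ → ℝ, (∀ n, φ n 0 = 0) ∧
      (∀ n, ∀ x ∈ Icc 0 h, HasDerivWithinAt (φ n) (lipschitzApprox g n (x, φ n x)) (Icc 0 h) x) ∧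
      ∀ x ∈ Icc 0 h, Monotone fun n => φ n x := by
  have hex : ∀ n : ℕ, ∃ φ : ℝ → ℝ, φ 0 = 0 ∧
      ∀ t ∈ Icc 0 h, HasDerivWithinAt φ (lipschitzApprox g n (t, φ t)) (Icc 0 h) t := fun n =>
    exists_hasDerivWithinAt_of_lipschitzWith (F := fun t y => lipschitzApprox g n (t, y)) hh
      (fun y => (lipschitzApprox.uniformContinuous hg hgM n).continuous.comp
        (continuous_id.prodMk continuous_const))
      (lipschitzApprox.lipschitzWith hgM n)
      (fun t y => lipschitzApprox.abs_le_of_forall_abs_le hgM n _)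
  choose φ hφ0 hφ using hex
  exact ⟨φ, hφ0, hφ, fun x hx => monotone_nat_of_le_succ fun n =>
    le_of_hasDerivWithinAt_of_le_add_mul (hφ n) (hφ (n + 1))
      (fun t y => lipschitzApprox.le_succ hgM n (t, y))
      (fun t y y' => lipschitzApprox.le_add_mul hgM (n + 1) t y y')
      (by rw [hφ0, hφ0]) hx⟩

theorem exists_hasDerivWithinAt_of_uniformContinuous {g : ℝ × ℝ → ℝ} (hg : UniformContinuous g)
    {M h : ℝ} (hgM : ∀ p, |g p| ≤ M) (hh : 0 ≤ h) :
    ∃ φ : ℝ → ℝ, φ 0 = 0 ∧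
      ∀ x ∈ Icc 0 h, |φ x| ≤ M * x ∧ HasDerivWithinAt φ (g (x, φ x)) (Icc 0 h) x := by
  obtain ⟨φ, hφ0, hφ, hmono⟩ := exists_monotone_hasDerivWithinAt_lipschitzApprox hg hgM hh
  have hφM : ∀ n, ∀ x ∈ Icc 0 h, |lipschitzApprox g n (x, φ n x)| ≤ M := fun n x _ =>
    lipschitzApprox.abs_le_of_forall_abs_le hgM n _
  have hbdd : ∀ x ∈ Icc 0 h, BddAbove (range fun n => φ n x) := fun x hx =>
    ⟨M * x, by
      rintro _ ⟨n, rfl⟩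
      exact (abs_le.mp (abs_le_mul_of_hasDerivWithinAt (hφ n) (hφM n) (hφ0 n) hx)).2⟩
  set ψ : ℝ → ℝ := fun x => ⨆ n, φ n x
  have hlim : ∀ x ∈ Icc 0 h, Tendsto (fun n => φ n x) atTop (𝓝 (ψ x)) := fun x hx =>
    tendsto_atTop_ciSup (hmono x hx) (hbdd x hx)
  have hψlip : ∀ x ∈ Icc 0 h, ∀ y ∈ Icc 0 h, |ψ y - ψ x| ≤ M * |y - x| := fun x hx y hy =>
    le_of_tendsto ((hlim y hy).sub (hlim x hx)).abs <| Eventually.of_forall fun n =>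
      (convex_Icc 0 h).norm_image_sub_le_of_norm_hasDerivWithin_le (hφ n) (hφM n) hx hy
  have hψ0 : ψ 0 = 0 := by simp [ψ, hφ0]
  refine ⟨ψ, hψ0, fun x hx => ⟨?_, ?_⟩⟩
  · simpa [hψ0, abs_of_nonneg hx.1] using hψlip 0 ⟨le_rfl, hh⟩ x hx
  · refine hasDerivWithinAt_of_tendsto_of_hasDerivWithinAt
      (lipschitzApprox.uniformContinuous hg hgM · |>.continuous)
      (lipschitzApprox.abs_le_of_forall_abs_le hgM) (lipschitzApprox.tendstoUniformly hg hgM)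
      hφ hlim ?_ hx
    exact (LipschitzOnWith.of_dist_le' fun x hx y hy => by
      simpa [Real.dist_eq] using hψlip y hy x hx).continuousOn

theorem UniformContinuous.comp_of_isCompact {α β γ : Type*} [UniformSpace α] [UniformSpace β]
    [UniformSpace γ] {K : Set α} (hK : IsCompact K) {f : α → β} (hf : ContinuousOn f K)
    {r : γ → α} (hr : UniformContinuous r) (hrK : ∀ x, r x ∈ K) : UniformContinuous (f ∘ r) :=
  uniformContinuousOn_univ.mp <|
    (hK.uniformContinuousOn_of_continuous hf).comp hr.uniformContinuousOn fun x _ => hrK x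

theorem UniformContinuous.max {α : Type*} [UniformSpace α] {f g : α → ℝ}
    (hf : UniformContinuous f) (hg : UniformContinuous g) :
    UniformContinuous fun x => max (f x) (g x) :=
  lipschitzWith_max.uniformContinuous.comp (hf.prodMk hg)

theorem UniformContinuous.min {α : Type*} [UniformSpace α] {f g : α → ℝ}
    (hf : UniformContinuous f) (hg : UniformContinuous g) :
    UniformContinuous fun x => min (f x) (g x) :=
  lipschitzWith_min.uniformContinuous.comp (hf.prodMk hg)

def stripBelow (b : ℝ → ℝ) (h : ℝ) : Set (ℝ × ℝ) :=
  {p | p.1 ∈ Icc 0 h ∧ p.2 ∈ Icc (b p.1 - p.1) (b p.1)}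

theorem exists_uniformContinuous_eq_min {f : ℝ × ℝ → ℝ} {b : ℝ → ℝ} {h : ℝ} (hh : 0 ≤ h)
    (hb : ContinuousOn b (Icc 0 h)) (hf : ContinuousOn f (stripBelow b h)) :
    ∃ g : ℝ × ℝ → ℝ, UniformContinuous g ∧ range g ⊆ f '' stripBelow b h ∧
      ∀ x ∈ Icc 0 h, ∀ y, b x - x ≤ y → g (x, y) = f (x, min y (b x)) := by
  -- the strip is the image of the triangle `T` under `τ (x, t) = (x, b x - t)`, and `κ`
  -- retracts the plane onto `T` uniformly continuously
  set T : Set (ℝ × ℝ) := {q | 0 ≤ q.2 ∧ q.2 ≤ q.1 ∧ q.1 ≤ h}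
  set τ : ℝ × ℝ → ℝ × ℝ := fun q => (q.1, b q.1 - q.2)
  set π : ℝ → ℝ := fun x => max 0 (min x h)
  set κ : ℝ × ℝ → ℝ × ℝ := fun p => (π p.1, max 0 (min (b (π p.1) - p.2) (π p.1)))
  have hTS : MapsTo τ T (stripBelow b h) := fun q ⟨h0, h1, h2⟩ =>
    ⟨⟨h0.trans h1, h2⟩, by simp only [τ]; constructor <;> linarith⟩
  have hT : IsCompact T := by
    refine (isCompact_Icc (a := ((0 : ℝ), (0 : ℝ))) (b := (h, h))).of_isClosed_subset ?_ ?_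
    · exact (isClosed_le continuous_const continuous_snd).inter
        ((isClosed_le continuous_snd continuous_fst).inter
          (isClosed_le continuous_fst continuous_const))
    · rintro q ⟨h0, h1, h2⟩
      exact ⟨⟨h0.trans h1, h0⟩, h2, h1.trans h2⟩
  have hπ : ∀ x, π x ∈ Icc 0 h := fun x => ⟨le_max_left _ _, max_le hh (min_le_right _ _)⟩
  have hπu : UniformContinuous π :=
    uniformContinuous_const.max (uniformContinuous_id.min uniformContinuous_const)
  have hκ : UniformContinuous κ := (hπu.comp uniformContinuous_fst).prodMk
    (uniformContinuous_const.max
      (((hπu.comp_of_isCompact isCompact_Icc hb hπ).comp uniformContinuous_fst).sub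
        uniformContinuous_snd |>.min (hπu.comp uniformContinuous_fst)))
  have hκT : ∀ p, κ p ∈ T := fun p =>
    ⟨le_max_left _ _, max_le (hπ p.1).1 (min_le_right _ _), (hπ p.1).2⟩
  have hτ : ContinuousOn τ T := continuousOn_fst.prodMk
    ((hb.comp continuousOn_fst fun q hq => (hTS hq).1).sub continuousOn_snd)
  refine ⟨(f ∘ τ) ∘ κ, hκ.comp_of_isCompact hT (hf.comp hτ hTS) hκT,
    fun _ ⟨p, hp⟩ => ⟨τ (κ p), hTS (hκT p), hp⟩, fun x hx y hy => ?_⟩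
  have hπx : π x = x := by simp only [π]; rw [min_eq_left hx.2, max_eq_right hx.1]
  simp only [Function.comp, κ, τ, hπx, min_eq_left (by linarith : b x - y ≤ x)]
  congr 2
  simp only [max_def, min_def]
  split_ifs <;> linarith

theorem exists_hasDerivWithinAt_mem_stripBelow {f : ℝ × ℝ → ℝ} {b b' : ℝ → ℝ} {h : ℝ}
    (hh : 0 ≤ h) (hb : ∀ x ∈ Icc 0 h, HasDerivWithinAt b (b' x) (Icc 0 h) x) (hb0 : b 0 = 0)
    (hb' : ∀ x ∈ Icc 0 h, |b' x| ≤ 1 / 2) (hf : ContinuousOn f (stripBelow b h))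
    (hfS : ∀ p ∈ stripBelow b h, |f p| ≤ 1 / 2) (hfb : ∀ x ∈ Ioc 0 h, f (x, b x) ≤ b' x) :
    ∃ φ : ℝ → ℝ, φ 0 = 0 ∧ ∀ x ∈ Icc 0 h, (x, φ x) ∈ stripBelow b h ∧
      HasDerivWithinAt φ (f (x, φ x)) (Icc 0 h) x := by
  obtain ⟨g, hgu, hgS, hgf⟩ :=
    exists_uniformContinuous_eq_min hh (fun x hx => (hb x hx).continuousWithinAt) hf
  have hgM : ∀ p, |g p| ≤ 1 / 2 := fun p => by
    obtain ⟨q, hq, hqp⟩ := hgS (mem_range_self p)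
    exact hqp ▸ hfS q hq
  obtain ⟨φ, hφ0, hφ⟩ := exists_hasDerivWithinAt_of_uniformContinuous hgu hgM hh
  have hlow : ∀ x ∈ Icc 0 h, b x - x ≤ φ x := fun x hx => by
    linarith [(abs_le.mp (hφ x hx).1).1,
      (abs_le.mp (abs_le_mul_of_hasDerivWithinAt hb hb' hb0 hx)).2]
  -- `b` is a barrier: above its graph `g` is frozen at `f (x, b x) ≤ b' x`
  have hup : ∀ x ∈ Icc 0 h, φ x ≤ b x := fun x hx => sub_nonpos.mp <|
    nonpos_of_hasDerivWithinAt_le_mul (L := 0) (f := fun t => φ t - b t)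
      (fun t ht => (hφ t ht).2.sub (hb t ht)) (by simp [hφ0, hb0]) (fun t ht hpos => by
        have ht0 : 0 < t := lt_of_le_of_ne ht.1 (by rintro rfl; simp [hφ0, hb0] at hpos)
        have hts : t ∈ Icc 0 h := Ico_subset_Icc_self ht
        rw [hgf t hts _ (hlow t hts), min_eq_right (by linarith)]
        linarith [hfb t ⟨ht0, ht.2.le⟩]) hx
  refine ⟨φ, hφ0, fun x hx => ⟨⟨hx, hlow x hx, hup x hx⟩, ?_⟩⟩
  simpa [hgf x hx _ (hlow x hx), min_eq_left (hup x hx)] using (hφ x hx).2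

theorem stripBelow_subset_closedBall {b : ℝ → ℝ} {h : ℝ}
    (hbx : ∀ x ∈ Icc 0 h, |b x| ≤ 1 / 2 * x) :
    stripBelow b h ⊆ Metric.closedBall (0, 0) (3 / 2 * h) := by
  rintro ⟨x, y⟩ ⟨hx, hy⟩
  have := abs_le.mp (hbx x hx)
  simp only [Metric.mem_closedBall, Prod.dist_eq, Real.dist_eq, sub_zero, max_le_iff, abs_le]
  refine ⟨⟨?_, ?_⟩, ?_, ?_⟩ <;> nlinarith [hy.1, hy.2, hx.1, hx.2]

theorem stripBelow_subset_union {G Ghat : Set (ℝ × ℝ)} {b : ℝ → ℝ} {h c : ℝ}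
    (hO : ((0 : ℝ), (0 : ℝ)) ∈ Ghat) (hb0 : b 0 = 0) (hbx : ∀ x ∈ Icc 0 h, |b x| ≤ 1 / 2 * x)
    (hhc : 3 / 2 * h ≤ c) (hcurve : ∀ x ∈ Ioc 0 h, (x, b x) ∈ Ghat)
    (hin : ∀ x y : ℝ, 0 < x → x ≤ c → -c ≤ y → y < b x → (x, y) ∈ G) :
    stripBelow b h ⊆ G ∪ Ghat := by
  rintro ⟨x, y⟩ ⟨hx, hy⟩
  dsimp only at hx hy
  rcases hx.1.eq_or_lt with rfl | hx0
  · obtain rfl : y = 0 := by simp only [hb0] at hy; linarith [hy.1, hy.2]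
    exact Or.inr hO
  rcases hy.2.eq_or_lt with rfl | hyb
  · exact Or.inr (hcurve x ⟨hx0, hx.2⟩)
  · exact Or.inl (hin x y hx0 (by linarith [hx.2])
      (by linarith [hy.1, (abs_le.mp (hbx x hx)).1, hx.2]) hyb)

theorem theorem1_case_U1_eq_general
    (G Ghat : Set (ℝ × ℝ))
    (f₀ : ℝ × ℝ → ℝ) (hf : ContinuousOn f₀ (G ∪ Ghat))
    (hO : ((0 : ℝ), (0 : ℝ)) ∈ Ghat) (hf0 : f₀ (0, 0) = 0)
    (a : ℝ) (ha : 0 < a)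
    (b b' : ℝ → ℝ)
    (hderiv : ∀ x ∈ Icc (0 : ℝ) a, HasDerivWithinAt b (b' x) (Icc (0 : ℝ) a) x)
    (hb'cont : ContinuousOn b' (Icc (0 : ℝ) a))
    (hb0 : b 0 = 0) (hb'0 : b' 0 = 0)
    (hcurve : ∀ x ∈ Ioc (0 : ℝ) a, (x, b x) ∈ Ghat)
    (hbc : ∀ x ∈ Ioc (0 : ℝ) a, f₀ (x, b x) ≤ b' x)
    (c : ℝ) (hc : c ∈ Ioc (0 : ℝ) a)
    (hin : ∀ x y : ℝ, 0 < x → x ≤ c → -c ≤ y → y < b x → (x, y) ∈ G) :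
    ∃ h ∈ Ioc (0 : ℝ) c, ∃ φ : ℝ → ℝ, φ 0 = 0 ∧
      ∀ x ∈ Icc (0 : ℝ) h, (x, φ x) ∈ G ∪ Ghat ∧
        HasDerivWithinAt φ (f₀ (x, φ x)) (Icc (0 : ℝ) h) x := by
  obtain ⟨δ₁, hδ₁, hb'δ⟩ := exists_pos_forall_abs_lt (hb'cont 0 ⟨le_rfl, ha.le⟩) hb'0 one_half_pos
  obtain ⟨δ₂, hδ₂, hfδ⟩ := exists_pos_forall_abs_lt (hf (0, 0) (Or.inr hO)) hf0 one_half_pos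
  obtain ⟨h, hh, hhc, hha, hhδ₁, hhδ₂⟩ :
      ∃ h, 0 < h ∧ h ≤ 2 / 3 * c ∧ h ≤ a ∧ h < δ₁ ∧ h < 2 / 3 * δ₂ := by
    have := hc.1
    exact (eventually_mem_nhdsWithin.and (nhdsWithin_le_nhds
      ((eventually_le_nhds (by positivity)).and ((eventually_le_nhds ha).and
        ((eventually_lt_nhds hδ₁).and (eventually_lt_nhds (by positivity))))))).exists
          (f := 𝓝[>] (0 : ℝ))
  have hIcc : Icc 0 h ⊆ Icc 0 a := Icc_subset_Icc le_rfl hha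
  have hb : ∀ x ∈ Icc 0 h, HasDerivWithinAt b (b' x) (Icc 0 h) x := fun x hx =>
    (hderiv x (hIcc hx)).mono hIcc
  have hb' : ∀ x ∈ Icc 0 h, |b' x| ≤ 1 / 2 := fun x hx =>
    (hb'δ x (hIcc hx) (by rw [Real.dist_eq, sub_zero, abs_of_nonneg hx.1]; linarith [hx.2])).le
  have hbx := fun x (hx : x ∈ Icc 0 h) => abs_le_mul_of_hasDerivWithinAt hb hb' hb0 hx
  have hS := stripBelow_subset_union hO hb0 hbx (by linarith)
    (fun x hx => hcurve x ⟨hx.1, hx.2.trans hha⟩) hin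
  obtain ⟨φ, hφ0, hφ⟩ := exists_hasDerivWithinAt_mem_stripBelow hh.le hb hb0 hb' (hf.mono hS)
    (fun p hp => (hfδ p (hS hp) ((stripBelow_subset_closedBall hbx hp).trans_lt (by linarith))).le)
    (fun x hx => hbc x ⟨hx.1, hx.2.trans hha⟩)
  exact ⟨h, ⟨hh, by linarith⟩, φ, hφ0, fun x hx => ⟨hS (hφ x hx).1, (hφ x hx).2⟩⟩

/-- Theorem 1, case U⁺₁,₌. -/
theorem theorem1_case_U1_eq
    (G Ghat : Set (ℝ × ℝ)) (hGopen : IsOpen G) (hGhat : Ghat ⊆ frontier G)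
    (f₀ : ℝ × ℝ → ℝ) (hf : ContinuousOn f₀ (G ∪ Ghat))
    (hO : ((0 : ℝ), (0 : ℝ)) ∈ Ghat) (hf0 : f₀ (0, 0) = 0)
    (a : ℝ) (ha : 0 < a)
    (b b' : ℝ → ℝ)
    (hderiv : ∀ x ∈ Icc (0 : ℝ) a, HasDerivWithinAt b (b' x) (Icc (0 : ℝ) a) x)
    (hb'cont : ContinuousOn b' (Icc (0 : ℝ) a))
    (hb0 : b 0 = 0) (hb'0 : b' 0 = 0)
    (hconv : ConvexOn ℝ (Icc (0 : ℝ) a) b)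
    (hcurve : ∀ x ∈ Ioc (0 : ℝ) a, (x, b x) ∈ Ghat)
    (hbc : ∀ x ∈ Ioc (0 : ℝ) a, f₀ (x, b x) ≤ b' x)
    (c : ℝ) (hc : c ∈ Ioc (0 : ℝ) a)
    (hin : ∀ x y : ℝ, 0 < x → x ≤ c → -c ≤ y → y < b x → (x, y) ∈ G) :
    ∃ h ∈ Ioc (0 : ℝ) c, ∃ φ : ℝ → ℝ, φ 0 = 0 ∧
      ∀ x ∈ Icc (0 : ℝ) h, (x, φ x) ∈ G ∪ Ghat ∧
        HasDerivWithinAt φ (f₀ (x, φ x)) (Icc (0 : ℝ) h) x :=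
  theorem1_case_U1_eq_general G Ghat f₀ hf hO hf0 a ha b b' hderiv hb'cont hb0 hb'0 hcurve hbc c hc
    hin
end

section
/- Theorem 1, case O⁺₁,₌: Assume there exist a > 0 and a continuously differentiable function b : [0,a] → ℝ with b(0) = 0, b'(0) = 0, b concave on [0,a], such that (x, b(x)) ∈ Ĝ for every x ∈ (0,a], the boundary condition (5⁺ₗ) holds: f₀(x, b(x)) ≥ b'(x) for all x ∈ (0,a], and there exists c ∈ (0,a] such that every point (x,y) with 0 < x ≤ c and b(x) < y ≤ c belongs to G. Then there exist h ∈ (0,c] and a function φ : [0,h] → ℝ with φ(0) = 0 which is a solution of y' = f₀(x,y) with graph in G̃ on [0,h]. -/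
/-!
Near the origin `f₀` is small on `G ∪ Ĝ` and `|b x| ≤ x / 2`. Composing `f₀` with the retraction of
the plane onto the wedge `b x ≤ y ≤ x / 2`, `0 ≤ x ≤ h`, which lies in `G ∪ Ĝ`, gives a continuous
field bounded by `1 / 2` on the whole plane, so Peano's theorem (proved via Tonelli's retarded
iterates and Arzelà–Ascoli) yields a solution `φ` with `|φ x| ≤ x / 2`. Where `φ ≤ b` the clamped
field equals `f₀ (x, b x) ≥ b' x`, so the boundary condition makes `b` a lower fence and `φ` never
crosses below it. Hence `φ` stays in the wedge, where the clamped field is `f₀` itself.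
-/

open Set Filter Topology MeasureTheory intervalIntegral
open scoped NNReal

theorem abs_integral_sub_integral_le {g : ℝ → ℝ} (hg : Continuous g) {M : ℝ}
    (hM : ∀ t, |g t| ≤ M) (a u v : ℝ) :
    |(∫ t in a..u, g t) - ∫ t in a..v, g t| ≤ M * |u - v| := by
  rw [integral_interval_sub_left (hg.intervalIntegrable _ _) (hg.intervalIntegrable _ _),
    ← Real.norm_eq_abs]
  exact norm_integral_le_of_norm_le_const fun t _ => (Real.norm_eq_abs (g t)).symm ▸ hM t

/-- Tonelli's retarded iterates: step `k + 1` reads step `k` only up to time `x - d`, so the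
iterates agree on longer and longer intervals (`tonelliSeq.succ_eq`). -/
noncomputable def tonelliSeq (f : ℝ × ℝ → ℝ) (d : ℝ) : ℕ → ℝ → ℝ
  | 0 => fun _ => 0
  | k + 1 => fun x => ∫ t in (0 : ℝ)..max (x - d) 0, f (t, tonelliSeq f d k t)

namespace tonelliSeq

variable {f : ℝ × ℝ → ℝ} {d : ℝ}

theorem continuous (hf : Continuous f) (d : ℝ) : ∀ k, Continuous (tonelliSeq f d k)
  | 0 => continuous_const
  | k + 1 =>
    have hg : Continuous fun t => f (t, tonelliSeq f d k t) :=
      hf.comp (continuous_id.prodMk (continuous hf d k))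
    (continuous_primitive (fun _ _ => hg.intervalIntegrable _ _) 0).comp (by fun_prop)

theorem lipschitzWith (hf : Continuous f) {K : ℝ≥0} (hbd : ∀ p, |f p| ≤ K) (d : ℝ) :
    ∀ k, LipschitzWith K (tonelliSeq f d k)
  | 0 => LipschitzWith.const' 0
  | k + 1 => LipschitzWith.of_dist_le_mul fun x y => by
    rw [Real.dist_eq, Real.dist_eq]
    calc _ ≤ K * |max (x - d) 0 - max (y - d) 0| :=
          abs_integral_sub_integral_le (hf.comp (continuous_id.prodMk (continuous hf d k)))
            (fun t => hbd _) 0 _ _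
      _ ≤ K * |x - y| := mul_le_mul_of_nonneg_left
          (by simpa only [sub_sub_sub_cancel_right] using abs_max_sub_max_le_abs (x - d) (y - d) 0)
          K.2

theorem apply_zero (hd : 0 ≤ d) : ∀ k, tonelliSeq f d k 0 = 0
  | 0 => rfl
  | k + 1 => by simp [tonelliSeq, max_eq_right (neg_nonpos.2 hd)]

theorem succ_eq (hd : 0 ≤ d) : ∀ k : ℕ, ∀ x ≤ k * d, tonelliSeq f d (k + 1) x = tonelliSeq f d k x
  | 0, x, hx => by
    simp [tonelliSeq, max_eq_right (show x - d ≤ 0 by rw [Nat.cast_zero, zero_mul] at hx; linarith)]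
  | k + 1, x, hx => by
    refine integral_congr fun t ht => ?_
    rw [uIcc_of_le (le_max_right _ _)] at ht
    have : t ≤ k * d := ht.2.trans (max_le (by push_cast at hx; linarith) (by positivity))
    simp only [succ_eq hd k t this]

theorem eq_integral (hd : 0 ≤ d) (k : ℕ) {x : ℝ} (hx : x ≤ (k + 1) * d) :
    tonelliSeq f d (k + 1) x = ∫ t in (0 : ℝ)..max (x - d) 0, f (t, tonelliSeq f d (k + 1) t) := by
  refine integral_congr fun t ht => ?_
  rw [uIcc_of_le (le_max_right _ _)] at ht
  have : t ≤ k * d := ht.2.trans (max_le (by linarith) (by positivity))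
  simp only [succ_eq hd k t this]

end tonelliSeq

open BoundedContinuousFunction in
theorem exists_continuous_tendsto_subseq_of_lipschitzWith {u : ℕ → ℝ → ℝ} {K : ℝ≥0} {h : ℝ}
    (hh : 0 ≤ h) (hlip : ∀ n, LipschitzWith K (u n)) (hu0 : ∀ n, u n 0 = 0) :
    ∃ U : ℝ → ℝ, Continuous U ∧ ∃ σ : ℕ → ℕ, StrictMono σ ∧
      ∀ x ∈ Icc 0 h, Tendsto (fun k => u (σ k) x) atTop (𝓝 (U x)) := by
  let o : Icc 0 h := ⟨0, left_mem_Icc.2 hh⟩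
  let A : Set (Icc 0 h →ᵇ ℝ) := {v | LipschitzWith K v ∧ v o = 0}
  have hA : IsCompact A := by
    refine arzela_ascoli₂ (Icc (-(K * h)) (K * h)) isCompact_Icc A ?_ (fun v x hv => ?_)
      (LipschitzWith.uniformEquicontinuous _ K fun v => v.2.1).equicontinuous
    · exact ((isClosed_setOfPred_lipschitzWith K).preimage
        (continuous_pi fun x => continuous_eval_const x)).inter
        (isClosed_eq (continuous_eval_const o) continuous_const)
    · have := hv.1.dist_le_mul x o
      rw [hv.2, Real.dist_eq, sub_zero, Subtype.dist_eq, Real.dist_eq, sub_zero,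
        abs_of_nonneg x.2.1] at this
      exact abs_le.1 (this.trans (by gcongr; exact x.2.2))
  let v n : Icc 0 h →ᵇ ℝ :=
    mkOfCompact ⟨fun x => u n x, (hlip n).continuous.comp continuous_subtype_val⟩
  have hvA n : v n ∈ A := ⟨mul_one K ▸ (hlip n).comp (LipschitzWith.subtype_val _), hu0 n⟩
  obtain ⟨w, -, σ, hσ, hlim⟩ := hA.tendsto_subseq hvA
  refine ⟨fun x => w (projIcc 0 h hh x), w.continuous.comp continuous_projIcc, σ, hσ,
    fun x hx => ?_⟩
  dsimp only
  rw [projIcc_of_mem hh hx]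
  exact ((continuous_eval_const _).tendsto w).comp hlim

theorem tendsto_integral_comp_of_tendsto {f : ℝ × ℝ → ℝ} (hf : Continuous f) {M : ℝ}
    (hbd : ∀ p, |f p| ≤ M) {u : ℕ → ℝ → ℝ} (hu : ∀ n, Continuous (u n)) {U : ℝ → ℝ} {x : ℝ}
    (hx : 0 ≤ x) (hlim : ∀ t ∈ Icc 0 x, Tendsto (fun n => u n t) atTop (𝓝 (U t))) :
    Tendsto (fun n => ∫ t in (0 : ℝ)..x, f (t, u n t)) atTop
      (𝓝 (∫ t in (0 : ℝ)..x, f (t, U t))) := by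
  refine tendsto_integral_filter_of_dominated_convergence (fun _ => M)
    (Eventually.of_forall fun n => (hf.comp (continuous_id.prodMk (hu n))).aestronglyMeasurable)
    (Eventually.of_forall fun n => ae_of_all _ fun t _ => (Real.norm_eq_abs _).symm ▸ hbd _)
    intervalIntegrable_const (ae_of_all _ fun t ht => ?_)
  rw [uIoc_of_le hx] at ht
  exact (hf.tendsto _).comp (tendsto_const_nhds.prodMk_nhds (hlim t (Ioc_subset_Icc_self ht)))

/-- Peano's existence theorem for a bounded continuous right-hand side. -/
theorem exists_hasDerivAt_of_continuous_of_abs_le {f : ℝ × ℝ → ℝ} (hf : Continuous f) {M : ℝ}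
    (hbd : ∀ p, |f p| ≤ M) {h : ℝ} (hh : 0 < h) :
    ∃ φ : ℝ → ℝ, φ 0 = 0 ∧ (∀ x, |φ x| ≤ M * |x|) ∧
      ∀ x ∈ Icc 0 h, HasDerivAt φ (f (x, φ x)) x := by
  lift M to ℝ≥0 using (abs_nonneg _).trans (hbd 0)
  let d (n : ℕ) : ℝ := h / (n + 1)
  have hd n : 0 ≤ d n := by positivity
  let u n := tonelliSeq f (d n) (n + 1)
  have hu n : Continuous (u n) := tonelliSeq.continuous hf _ _
  obtain ⟨U, hUc, σ, hσ, hlim⟩ := exists_continuous_tendsto_subseq_of_lipschitzWith hh.le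
    (fun n => tonelliSeq.lipschitzWith hf hbd (d n) (n + 1))
    (fun n => tonelliSeq.apply_zero (hd n) _)
  have hg : Continuous fun t => f (t, U t) := hf.comp (continuous_id.prodMk hUc)
  have happrox n x (hx : x ∈ Icc 0 h) :
      dist (∫ t in (0 : ℝ)..x, f (t, u n t)) (u n x) ≤ M * d n := by
    have hxd : x ≤ (n + 1) * d n := by
      rw [mul_div_cancel₀ _ (by positivity)]; exact hx.2
    rw [Real.dist_eq, show u n x = _ from tonelliSeq.eq_integral (hd n) n hxd]
    refine (abs_integral_sub_integral_le (hf.comp (continuous_id.prodMk (hu n)))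
      (fun t => hbd _) 0 _ _).trans (mul_le_mul_of_nonneg_left ?_ M.2)
    have := le_max_left (x - d n) 0
    have := max_le (sub_le_self x (hd n)) hx.1
    rw [abs_le]
    constructor <;> linarith [hd n]
  have hfix : ∀ x ∈ Icc 0 h, U x = ∫ t in (0 : ℝ)..x, f (t, U t) := by
    intro x hx
    have hd0 : Tendsto (fun k => (M : ℝ) * d (σ k)) atTop (𝓝 0) := by
      have : Tendsto d atTop (𝓝 0) := tendsto_const_div_atTop_nhds_zero_nat h |>.comp
        (tendsto_add_atTop_nat 1) |>.congr fun n => by simp [d]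
      simpa using (this.comp hσ.tendsto_atTop).const_mul (M : ℝ)
    refine tendsto_nhds_unique (hlim x hx) ?_
    refine (tendsto_integral_comp_of_tendsto hf hbd (fun k => hu (σ k)) hx.1
      fun t ht => hlim t ⟨ht.1, ht.2.trans hx.2⟩).congr_dist ?_
    exact squeeze_zero (fun _ => dist_nonneg) (fun k => happrox (σ k) x hx) hd0
  refine ⟨fun x => ∫ t in (0 : ℝ)..x, f (t, U t), integral_same, fun x => ?_, fun x hx => ?_⟩
  · simpa using abs_integral_sub_integral_le hg (fun t => hbd _) 0 x 0
  · dsimp only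
    rw [← hfix x hx]
    exact (hg.integral_hasStrictDerivAt 0 x).hasDerivAt

theorem image_le_of_deriv_right_le_deriv_boundary_of_ge {f f' B B' : ℝ → ℝ} {a b : ℝ}
    (hf : ContinuousOn f (Icc a b)) (hf' : ∀ x ∈ Ico a b, HasDerivWithinAt f (f' x) (Ici x) x)
    (ha : f a ≤ B a) (hB : ContinuousOn B (Icc a b))
    (hB' : ∀ x ∈ Ico a b, HasDerivWithinAt B (B' x) (Ici x) x)
    (bound : ∀ x ∈ Ico a b, B x ≤ f x → f' x ≤ B' x) : ∀ ⦃x⦄, x ∈ Icc a b → f x ≤ B x := by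
  intro x hx
  -- the strict comparison theorem applies to `f` tilted down by `ε (x - a)`
  have htilt : ∀ ε > 0, f x - ε * (x - a) ≤ B x := fun ε hε =>
    image_le_of_deriv_right_lt_deriv_boundary' (f := fun y => f y - ε * (y - a))
      (hf.sub (by fun_prop))
      (fun y hy => by
        simpa using (hf' y hy).fun_sub (((hasDerivWithinAt_id y _).sub_const a).const_mul ε))
      (by simpa using ha) hB hB'
      (fun y hy hyB => by
        have := bound y hy (by nlinarith [mul_nonneg hε.le (sub_nonneg.2 hy.1)])
        linarith) hx
  have hlim : Tendsto (fun ε => f x - ε * (x - a)) (𝓝[>] 0) (𝓝 (f x)) := by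
    refine (Continuous.tendsto' (by fun_prop) 0 _ (by simp)).mono_left nhdsWithin_le_nhds
  exact le_of_tendsto hlim (eventually_nhdsWithin_of_forall htilt)

theorem exists_pos_forall_abs_le_mul_of_hasDerivWithinAt {b : ℝ → ℝ}
    (hb : HasDerivWithinAt b 0 (Ici 0) 0) (hb0 : b 0 = 0) {ε : ℝ} (hε : 0 < ε) :
    ∃ δ > 0, ∀ x ∈ Icc 0 δ, |b x| ≤ ε * x := by
  have := (hasDerivWithinAt_iff_isLittleO.1 hb).def hε
  obtain ⟨δ, hδ, hsmall⟩ := nhdsGE_basis_Icc.eventually_iff.1 this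
  refine ⟨δ, hδ, fun x hx => ?_⟩
  simpa [hb0, abs_of_nonneg hx.1] using hsmall hx

def clampBetween (l u : ℝ → ℝ) (x₀ x₁ : ℝ) (p : ℝ × ℝ) : ℝ × ℝ :=
  let x := max x₀ (min p.1 x₁)
  (x, max (l x) (min p.2 (u x)))

section clampBetween

variable {l u : ℝ → ℝ} {x₀ x₁ x y : ℝ}

theorem clampBetween_of_mem (hx : x ∈ Icc x₀ x₁) (hy : y ∈ Icc (l x) (u x)) :
    clampBetween l u x₀ x₁ (x, y) = (x, y) := by
  simp [clampBetween, hx.1, hx.2, hy.1, hy.2]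

theorem clampBetween_of_le (hx : x ∈ Icc x₀ x₁) (hy : y ≤ l x) :
    clampBetween l u x₀ x₁ (x, y) = (x, l x) := by
  simp [clampBetween, hx.1, hx.2, hy]

theorem clampBetween_mem (hx₀₁ : x₀ ≤ x₁) (hlu : ∀ x ∈ Icc x₀ x₁, l x ≤ u x) (p : ℝ × ℝ) :
    (clampBetween l u x₀ x₁ p).1 ∈ Icc x₀ x₁ ∧
      (clampBetween l u x₀ x₁ p).2 ∈ Icc (l (clampBetween l u x₀ x₁ p).1)
        (u (clampBetween l u x₀ x₁ p).1) := by
  have hx : max x₀ (min p.1 x₁) ∈ Icc x₀ x₁ := ⟨le_max_left _ _, max_le hx₀₁ (min_le_right _ _)⟩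
  exact ⟨hx, le_max_left _ _, max_le (hlu _ hx) (min_le_right _ _)⟩

theorem continuous_clampBetween (hx₀₁ : x₀ ≤ x₁) (hl : ContinuousOn l (Icc x₀ x₁))
    (hu : ContinuousOn u (Icc x₀ x₁)) : Continuous (clampBetween l u x₀ x₁) := by
  have hx : Continuous fun p : ℝ × ℝ => max x₀ (min p.1 x₁) := by fun_prop
  have hmem p : max x₀ (min (p : ℝ × ℝ).1 x₁) ∈ Icc x₀ x₁ :=
    ⟨le_max_left _ _, max_le hx₀₁ (min_le_right _ _)⟩
  exact hx.prodMk ((hl.comp_continuous hx hmem).max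
    (continuous_snd.min (hu.comp_continuous hx hmem)))

end clampBetween

theorem exists_hasDerivAt_of_lower_fence {S : Set (ℝ × ℝ)} {f : ℝ × ℝ → ℝ}
    (hf : ContinuousOn f S) {l l' : ℝ → ℝ} {h M : ℝ} (hh : 0 < h)
    (hl : ContinuousOn l (Icc 0 h)) (hl' : ∀ x ∈ Ico 0 h, HasDerivWithinAt l (l' x) (Ici x) x)
    (hl0 : l 0 = 0) (hfence : ∀ x ∈ Ico 0 h, l' x ≤ f (x, l x))
    (hlM : ∀ x ∈ Icc 0 h, l x ≤ M * x)
    (hS : ∀ x ∈ Icc 0 h, ∀ y ∈ Icc (l x) (M * x), (x, y) ∈ S ∧ |f (x, y)| ≤ M) :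
    ∃ φ : ℝ → ℝ, φ 0 = 0 ∧
      ∀ x ∈ Icc 0 h, φ x ∈ Icc (l x) (M * x) ∧ HasDerivAt φ (f (x, φ x)) x := by
  let F p := f (clampBetween l (M * ·) 0 h p)
  have hclamp := clampBetween_mem hh.le hlM
  have hFc : Continuous F := hf.comp_continuous
    (continuous_clampBetween hh.le hl (by fun_prop)) fun p => (hS _ (hclamp p).1 _ (hclamp p).2).1
  obtain ⟨φ, hφ0, hφM, hφ⟩ := exists_hasDerivAt_of_continuous_of_abs_le hFc
    (fun p => (hS _ (hclamp p).1 _ (hclamp p).2).2) hh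
  have hlow : ∀ x ∈ Icc 0 h, l x ≤ φ x := by
    refine image_le_of_deriv_right_le_deriv_boundary_of_ge hl hl' (by rw [hl0, hφ0])
      (fun x hx => (hφ x hx).continuousAt.continuousWithinAt)
      (fun x hx => (hφ x (Ico_subset_Icc_self hx)).hasDerivWithinAt) fun x hx hφl => ?_
    simpa only [F, clampBetween_of_le (Ico_subset_Icc_self hx) hφl] using hfence x hx
  have hup : ∀ x ∈ Icc 0 h, φ x ≤ M * x := fun x hx =>
    (le_abs_self _).trans ((hφM x).trans_eq (by rw [abs_of_nonneg hx.1]))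
  refine ⟨φ, hφ0, fun x hx => ⟨⟨hlow x hx, hup x hx⟩, ?_⟩⟩
  simpa only [F, clampBetween_of_mem (u := (M * ·)) hx ⟨hlow x hx, hup x hx⟩] using hφ x hx

theorem mem_union_of_mem_Icc_graph {G Ghat : Set (ℝ × ℝ)} {b : ℝ → ℝ} {c x y : ℝ}
    (hO : ((0 : ℝ), (0 : ℝ)) ∈ Ghat) (hb0 : b 0 = 0)
    (hcurve : ∀ x ∈ Ioc 0 c, (x, b x) ∈ Ghat)
    (hin : ∀ x y : ℝ, 0 < x → x ≤ c → b x < y → y ≤ c → (x, y) ∈ G)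
    (hx : x ∈ Icc 0 c) (hy : y ∈ Icc (b x) x) : (x, y) ∈ G ∪ Ghat := by
  rcases hx.1.eq_or_lt with rfl | hx0
  · obtain rfl : y = 0 := le_antisymm hy.2 (hb0 ▸ hy.1)
    exact Or.inr hO
  rcases hy.1.eq_or_lt with rfl | hby
  · exact Or.inr (hcurve x ⟨hx0, hx.2⟩)
  · exact Or.inl (hin x y hx0 hx.2 hby (hy.2.trans hx.2))

theorem exists_pos_forall_abs_le_of_continuousWithinAt {S : Set (ℝ × ℝ)} {f : ℝ × ℝ → ℝ}
    (hf : ContinuousWithinAt f S (0, 0)) (hf0 : f (0, 0) = 0) {ε : ℝ} (hε : 0 < ε) :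
    ∃ δ > 0, ∀ x ∈ Icc 0 δ, ∀ y, |y| ≤ x → (x, y) ∈ S → |f (x, y)| ≤ ε := by
  obtain ⟨δ, hδ, hsmall⟩ := Metric.continuousWithinAt_iff.1 hf ε hε
  refine ⟨δ / 2, by positivity, fun x hx y hy hxy => ?_⟩
  have hdist : dist (x, y) ((0 : ℝ), (0 : ℝ)) < δ := by
    rw [Prod.dist_eq, Real.dist_eq, Real.dist_eq, sub_zero, sub_zero, abs_of_nonneg hx.1]
    exact max_lt (by linarith [hx.2]) (by linarith [hx.2])
  simpa [hf0] using (hsmall hxy hdist).le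

theorem theorem1_case_O1_eq_general
    (G Ghat : Set (ℝ × ℝ))
    (f₀ : ℝ × ℝ → ℝ) (hf : ContinuousOn f₀ (G ∪ Ghat))
    (hO : ((0 : ℝ), (0 : ℝ)) ∈ Ghat) (hf0 : f₀ (0, 0) = 0)
    (a : ℝ)
    (b b' : ℝ → ℝ)
    (hderiv : ∀ x ∈ Icc (0 : ℝ) a, HasDerivWithinAt b (b' x) (Icc (0 : ℝ) a) x)
    (hb0 : b 0 = 0) (hb'0 : b' 0 = 0)
    (hcurve : ∀ x ∈ Ioc (0 : ℝ) a, (x, b x) ∈ Ghat)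
    (hbc : ∀ x ∈ Ioc (0 : ℝ) a, b' x ≤ f₀ (x, b x))
    (c : ℝ) (hc : c ∈ Ioc (0 : ℝ) a)
    (hin : ∀ x y : ℝ, 0 < x → x ≤ c → b x < y → y ≤ c → (x, y) ∈ G) :
    ∃ h ∈ Ioc (0 : ℝ) c, ∃ φ : ℝ → ℝ, φ 0 = 0 ∧
      ∀ x ∈ Icc (0 : ℝ) h, (x, φ x) ∈ G ∪ Ghat ∧
        HasDerivWithinAt φ (f₀ (x, φ x)) (Icc (0 : ℝ) h) x := by
  obtain ⟨hc0, hca⟩ := hc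
  have hb : ∀ x ∈ Ico 0 a, HasDerivWithinAt b (b' x) (Ici x) x := fun x hx =>
    (hderiv x (Ico_subset_Icc_self hx)).mono_of_mem_nhdsWithin
      (mem_of_superset (Icc_mem_nhdsGE hx.2) (Icc_subset_Icc_left hx.1))
  obtain ⟨δ₁, hδ₁, hbsmall⟩ := exists_pos_forall_abs_le_mul_of_hasDerivWithinAt
    (by simpa only [hb'0] using hb 0 ⟨le_rfl, hc0.trans_le hca⟩) hb0 one_half_pos
  obtain ⟨δ₂, hδ₂, hfsmall⟩ :=
    exists_pos_forall_abs_le_of_continuousWithinAt (hf _ (Or.inr hO)) hf0 one_half_pos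
  obtain ⟨h, hh, hhc, hhδ₁, hhδ₂⟩ : ∃ h > 0, h ≤ c ∧ h ≤ δ₁ ∧ h ≤ δ₂ :=
    ⟨min c (min δ₁ δ₂), by positivity, by simp, by simp, by simp⟩
  have hwedge : ∀ x ∈ Icc 0 h, ∀ y ∈ Icc (b x) (1 / 2 * x),
      (x, y) ∈ G ∪ Ghat ∧ |f₀ (x, y)| ≤ 1 / 2 := by
    intro x hx y hy
    have hbx := abs_le.1 (hbsmall x ⟨hx.1, hx.2.trans hhδ₁⟩)
    have hyx : |y| ≤ x := abs_le.2 ⟨by linarith [hy.1], by linarith [hy.2, hx.1]⟩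
    have hmem := mem_union_of_mem_Icc_graph hO hb0 (fun x hx => hcurve x ⟨hx.1, hx.2.trans hca⟩)
      hin ⟨hx.1, hx.2.trans hhc⟩ ⟨hy.1, (le_abs_self y).trans hyx⟩
    exact ⟨hmem, hfsmall x ⟨hx.1, hx.2.trans hhδ₂⟩ y hyx hmem⟩
  have hha : h ≤ a := hhc.trans hca
  obtain ⟨φ, hφ0, hφ⟩ := exists_hasDerivAt_of_lower_fence hf hh
    (fun x hx => (hderiv x ⟨hx.1, hx.2.trans hha⟩).continuousWithinAt.mono
      (Icc_subset_Icc_right hha))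
    (fun x hx => hb x ⟨hx.1, hx.2.trans_le hha⟩) hb0
    (fun x hx => hx.1.eq_or_lt.elim (fun hx0 => by rw [← hx0, hb'0, hb0, hf0])
      fun hx0 => hbc x ⟨hx0, hx.2.le.trans hha⟩)
    (fun x hx => (le_abs_self _).trans (hbsmall x ⟨hx.1, hx.2.trans hhδ₁⟩)) hwedge
  exact ⟨h, ⟨hh, hhc⟩, φ, hφ0, fun x hx =>
    ⟨(hwedge x hx _ (hφ x hx).1).1, (hφ x hx).2.hasDerivWithinAt⟩⟩

/-- Theorem 1, case O⁺₁,₌. -/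
theorem theorem1_case_O1_eq
    (G Ghat : Set (ℝ × ℝ)) (hGopen : IsOpen G) (hGhat : Ghat ⊆ frontier G)
    (f₀ : ℝ × ℝ → ℝ) (hf : ContinuousOn f₀ (G ∪ Ghat))
    (hO : ((0 : ℝ), (0 : ℝ)) ∈ Ghat) (hf0 : f₀ (0, 0) = 0)
    (a : ℝ) (ha : 0 < a)
    (b b' : ℝ → ℝ)
    (hderiv : ∀ x ∈ Icc (0 : ℝ) a, HasDerivWithinAt b (b' x) (Icc (0 : ℝ) a) x)
    (hb'cont : ContinuousOn b' (Icc (0 : ℝ) a))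
    (hb0 : b 0 = 0) (hb'0 : b' 0 = 0)
    (hconc : ConcaveOn ℝ (Icc (0 : ℝ) a) b)
    (hcurve : ∀ x ∈ Ioc (0 : ℝ) a, (x, b x) ∈ Ghat)
    (hbc : ∀ x ∈ Ioc (0 : ℝ) a, b' x ≤ f₀ (x, b x))
    (c : ℝ) (hc : c ∈ Ioc (0 : ℝ) a)
    (hin : ∀ x y : ℝ, 0 < x → x ≤ c → b x < y → y ≤ c → (x, y) ∈ G) :
    ∃ h ∈ Ioc (0 : ℝ) c, ∃ φ : ℝ → ℝ, φ 0 = 0 ∧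
      ∀ x ∈ Icc (0 : ℝ) h, (x, φ x) ∈ G ∪ Ghat ∧
        HasDerivWithinAt φ (f₀ (x, φ x)) (Icc (0 : ℝ) h) x :=
  theorem1_case_O1_eq_general G Ghat f₀ hf hO hf0 a b b' hderiv hb0 hb'0 hcurve hbc c hc hin
end

section
/- Theorem 1, case B⁺₁,>,<: Assume there exist a > 0, τᵤ > 0, τₗ > 0 and continuously differentiable functions bᵤ, bₗ : [0,a] → ℝ with bᵤ(0) = bₗ(0) = 0, bᵤ'(x) ≥ τᵤ and bₗ'(x) ≤ −τₗ for all x ∈ [0,a], such that (x, bᵤ(x)) ∈ Ĝ and (x, bₗ(x)) ∈ Ĝ for every x ∈ (0,a], and there exists c ∈ (0,a] such that every point (x,y) with 0 < x ≤ c and bₗ(x) < y < bᵤ(x) belongs to G. Then there exist h ∈ (0,c] and a function φ : [0,h] → ℝ with φ(0) = 0 which is a solution of y' = f₀(x,y) with graph in G̃ on [0,h]. -/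
/-!
Since `bᵤ' ≥ τᵤ` and `bₗ' ≤ -τₗ`, for every `ε < min τᵤ τₗ` the funnel between the two curves
contains the cone `|y| ≤ ε x`, `0 < x ≤ h`; by continuity of `f₀` at the origin, `|f₀| ≤ ε` on
this cone once `h` is small. Extend `f₀` from the cone (Tietze) to a continuous `F` with values in
`[-ε, ε]` and solve `y' = F(x, y)`, `y(0) = 0` by Peano's theorem: the solution satisfies
`|φ x| ≤ ε x`, so it never leaves the cone, where `F = f₀`.

Peano's theorem is proved by approximation. The inf-convolutions
`F_k(x, y) = inf_z F(x, z) + k |y - z|` are `k`-Lipschitz in `y` and converge uniformly to `F` when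
`F` is uniformly continuous; the Picard–Lindelöf solutions of `y' = F_k(x, y)` are equi-Lipschitz,
and the limit of a uniformly convergent subsequence (Arzelà–Ascoli) solves the integral equation.
-/

open Set Metric Filter Topology NNReal

noncomputable def infConv (F : ℝ × ℝ → ℝ) (k : ℝ≥0) (p : ℝ × ℝ) : ℝ :=
  ⨅ z : ℝ, F (p.1, z) + k * |p.2 - z|

section infConv

variable {F : ℝ × ℝ → ℝ} {C : ℝ}

lemma infConv_le_add_mul (hC : ∀ p, |F p| ≤ C) (k : ℝ≥0) (x y z : ℝ) :
    infConv F k (x, y) ≤ F (x, z) + k * |y - z| := by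
  refine ciInf_le ⟨-C, ?_⟩ z
  rintro _ ⟨z, rfl⟩
  have := (abs_le.1 (hC (x, z))).1
  have : (0 : ℝ) ≤ k * |y - z| := by positivity
  linarith

lemma infConv_le (hC : ∀ p, |F p| ≤ C) (k : ℝ≥0) (p : ℝ × ℝ) : infConv F k p ≤ F p := by
  simpa using infConv_le_add_mul hC k p.1 p.2 p.2

lemma abs_infConv_le (hC : ∀ p, |F p| ≤ C) (k : ℝ≥0) (p : ℝ × ℝ) : |infConv F k p| ≤ C := by
  refine abs_le.2 ⟨le_ciInf fun z => ?_, (infConv_le hC k p).trans (abs_le.1 (hC p)).2⟩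
  have := (abs_le.1 (hC (p.1, z))).1
  have : (0 : ℝ) ≤ k * |p.2 - z| := by positivity
  linarith

lemma lipschitzWith_infConv (hC : ∀ p, |F p| ≤ C) (k : ℝ≥0) (x : ℝ) :
    LipschitzWith k fun y => infConv F k (x, y) := by
  refine LipschitzWith.of_le_add_mul k fun y₁ y₂ => ?_
  rw [← sub_le_iff_le_add]
  refine le_ciInf fun z => ?_
  have := infConv_le_add_mul hC k x y₁ z
  have : |y₁ - z| ≤ |y₁ - y₂| + |y₂ - z| := abs_sub_le _ _ _
  rw [Real.dist_eq]
  nlinarith [k.2]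

lemma infConv_le_infConv_add (hC : ∀ p, |F p| ≤ C) {ε : ℝ} (k : ℝ≥0) {x x' : ℝ}
    (h : ∀ z, F (x, z) ≤ F (x', z) + ε) (y : ℝ) :
    infConv F k (x, y) ≤ infConv F k (x', y) + ε := by
  rw [← sub_le_iff_le_add]
  refine le_ciInf fun z => ?_
  linarith [infConv_le_add_mul hC k x y z, h z]

lemma continuous_infConv (hC : ∀ p, |F p| ≤ C) (hF : UniformContinuous F) (k : ℝ≥0) :
    Continuous (infConv F k) := by
  refine continuous_prod_of_continuous_lipschitzWith' _ k (lipschitzWith_infConv hC k) fun y => ?_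
  refine (Metric.uniformContinuous_iff.2 fun ε hε => ?_).continuous
  obtain ⟨δ, hδ, hFδ⟩ := Metric.uniformContinuous_iff.1 hF (ε / 2) (half_pos hε)
  refine ⟨δ, hδ, fun {x x'} hxx' => ?_⟩
  have close : ∀ {x x'}, dist x x' < δ → ∀ z, F (x, z) ≤ F (x', z) + ε / 2 := by
    intro x x' h z
    have := hFδ (a := (x, z)) (b := (x', z)) (by simpa [Prod.dist_eq] using h)
    linarith [(abs_lt.1 (Real.dist_eq _ _ ▸ this)).2]
  rw [Real.dist_eq, abs_sub_lt_iff]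
  constructor
  · linarith [infConv_le_infConv_add hC k (close hxx') y]
  · linarith [infConv_le_infConv_add hC k (close (dist_comm x x' ▸ hxx')) y]

lemma tendstoUniformly_infConv (hC : ∀ p, |F p| ≤ C) (hF : UniformContinuous F) :
    TendstoUniformly (fun n : ℕ => infConv F n) F atTop := by
  rw [Metric.tendstoUniformly_iff]
  intro ε hε
  obtain ⟨δ, hδ, hFδ⟩ := Metric.uniformContinuous_iff.1 hF (ε / 2) (half_pos hε)
  filter_upwards [eventually_ge_atTop ⌈2 * C / δ⌉₊] with n hn p
  -- beyond distance `δ` the penalty `n |y - z| ≥ 2C` dominates the oscillation of `F`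
  have hlower : F p - ε / 2 ≤ infConv F n p := by
    refine le_ciInf fun z => ?_
    push_cast
    by_cases hz : |p.2 - z| < δ
    · have hd := hFδ (a := (p.1, z)) (b := p)
        (by simpa [Prod.dist_eq, Real.dist_eq, abs_sub_comm] using hz)
      rw [Real.dist_eq] at hd
      have : (0 : ℝ) ≤ n * |p.2 - z| := by positivity
      linarith [(abs_lt.1 hd).1]
    · have hn' : 2 * C / δ ≤ n := (Nat.le_ceil _).trans (by exact_mod_cast hn)
      have : 2 * C ≤ n * |p.2 - z| := by
        rw [div_le_iff₀ hδ] at hn'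
        nlinarith [not_lt.1 hz, Nat.cast_nonneg (α := ℝ) n]
      linarith [(abs_le.1 (hC p)).2, (abs_le.1 (hC (p.1, z))).1]
  rw [Real.dist_eq, abs_sub_comm, abs_sub_lt_iff]
  constructor <;> linarith [infConv_le hC n p]

end infConv

theorem exists_hasDerivWithinAt_Icc_of_lipschitzWith {G : ℝ × ℝ → ℝ} (hG : Continuous G)
    {C T : ℝ} {K : ℝ≥0} (hT : 0 ≤ T) (hC : ∀ p, |G p| ≤ C)
    (hK : ∀ t, LipschitzWith K fun y => G (t, y)) :
    ∃ f : ℝ → ℝ, f 0 = 0 ∧ ∀ t ∈ Icc 0 T, HasDerivWithinAt f (G (t, f t)) (Icc 0 T) t := by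
  have hC0 : 0 ≤ C := (abs_nonneg _).trans (hC 0)
  have hPL : IsPicardLindelof (fun t y => G (t, y)) (tmin := 0) (tmax := T)
      ⟨0, left_mem_Icc.2 hT⟩ 0 ⟨C * T, by positivity⟩ 0 ⟨C, hC0⟩ K :=
    { lipschitzOnWith := fun t _ => (hK t).lipschitzOnWith
      continuousOn := fun y _ => (hG.comp (continuous_id.prodMk continuous_const)).continuousOn
      norm_le := fun t _ y _ => hC (t, y)
      mul_max_le := by simp [max_eq_left hT]; rfl }
  exact hPL.exists_eq_forall_mem_Icc_hasDerivWithinAt₀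

theorem exists_subseq_tendstoUniformlyOn_Icc_of_lipschitzOnWith {f : ℕ → ℝ → ℝ} {K : ℝ≥0}
    {a b : ℝ} (hab : a ≤ b) (hf : ∀ n, LipschitzOnWith K (f n) (Icc a b))
    (hfa : ∀ n, f n a = 0) :
    ∃ ψ : ℝ → ℝ, LipschitzWith K ψ ∧ ψ a = 0 ∧ ∃ ns : ℕ → ℕ, StrictMono ns ∧
      TendstoUniformlyOn (fun n => f (ns n)) ψ atTop (Icc a b) := by
  let I := Icc a b
  let x₀ : I := ⟨a, left_mem_Icc.2 hab⟩
  let S : Set C(I, ℝ) := {g | LipschitzWith K g ∧ g x₀ = 0}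
  have hbound : ∀ g : I → ℝ, LipschitzWith K g → g x₀ = 0 →
      g ∈ Set.pi univ fun _ => Icc (-(K * (b - a))) (K * (b - a)) := by
    intro g hg hg0 x _
    have hx : dist x x₀ ≤ b - a := by
      rw [Subtype.dist_eq, Real.dist_eq, abs_of_nonneg (sub_nonneg.2 x.2.1)]
      linarith [x.2.2]
    rw [mem_Icc, ← abs_le, ← sub_zero (g x), ← hg0, ← Real.dist_eq]
    exact (hg.dist_le_mul x x₀).trans (by gcongr)
  have hS : IsCompact S := by
    refine ArzelaAscoli.isCompact_of_equicontinuous S ?_ ?_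
    · have himg : ContinuousMap.toFun '' S = {g : I → ℝ | LipschitzWith K g ∧ g x₀ = 0} := by
        ext g
        exact ⟨by rintro ⟨g, hg, rfl⟩; exact hg, fun hg => ⟨⟨g, hg.1.continuous⟩, hg, rfl⟩⟩
      rw [himg]
      exact (isCompact_univ_pi fun _ => isCompact_Icc).of_isClosed_subset
        ((isClosed_setOfPred_lipschitzWith K).inter (isClosed_eq (continuous_apply x₀)
          continuous_const)) fun g hg => hbound g hg.1 hg.2
    · refine equicontinuous_of_continuity_modulus (fun d => K * d) ?_ _ fun x y g => ?_
      · simpa using (continuous_const_mul (K : ℝ)).tendsto 0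
      · exact g.2.1.dist_le_mul x y
  obtain ⟨u, ⟨hu, hu0⟩, ns, hns, hconv⟩ :=
    hS.isSeqCompact (x := fun n => ⟨I.domRestrict (f n), (hf n).continuousOn.domRestrict⟩)
      fun n => ⟨(hf n).to_restrict, hfa n⟩
  refine ⟨u ∘ projIcc a b hab, by simpa using hu.comp (LipschitzWith.projIcc hab),
    by simpa [projIcc_left] using hu0, ns, hns, ?_⟩
  have hψ : (u ∘ projIcc a b hab) ∘ ((↑) : I → ℝ) = u := funext fun x => by simp [projIcc_val]
  rw [tendstoUniformlyOn_iff_tendstoUniformly_comp_coe, hψ]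
  exact ContinuousMap.tendsto_iff_tendstoUniformly.1 hconv

theorem hasDerivWithinAt_Icc_of_tendstoUniformlyOn {ι E : Type*} [NormedAddCommGroup E]
    [NormedSpace ℝ E] [CompleteSpace E] {l : Filter ι} [l.NeBot] [l.IsCountablyGenerated]
    {f g : ι → ℝ → E} {ψ γ : ℝ → E} {a b : ℝ}
    (hf : ∀ i, ∀ x ∈ Icc a b, HasDerivWithinAt (f i) (g i x) (Icc a b) x)
    (hg : ∀ i, ContinuousOn (g i) (Icc a b))
    (hfψ : ∀ x ∈ Icc a b, Tendsto (fun i => f i x) l (𝓝 (ψ x)))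
    (hgγ : TendstoUniformlyOn g γ l (Icc a b)) (hγ : Continuous γ) {x : ℝ} (hx : x ∈ Icc a b) :
    HasDerivWithinAt ψ (γ x) (Icc a b) x := by
  have hψ : ∀ y ∈ Icc a b, ψ y = ψ a + ∫ t in a..y, γ t := by
    intro y hy
    have hsub : Icc a y ⊆ Icc a b := Icc_subset_Icc_right hy.2
    have hFTC : ∀ i, f i y = f i a + ∫ t in a..y, g i t := fun i => by
      rw [intervalIntegral.integral_eq_sub_of_hasDeriv_right_of_le hy.1
        (fun t ht => (hf i t (hsub ht)).continuousWithinAt.mono hsub)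
        (fun t ht => (hf i t (hsub (Ioo_subset_Icc_self ht))).hasDerivAt
          (Icc_mem_nhds ht.1 (ht.2.trans_le hy.2)) |>.hasDerivWithinAt)
        (((hg i).mono hsub).intervalIntegrable_of_Icc hy.1)]
      abel
    have hsub' : uIcc a y ⊆ Icc a b := uIcc_of_le hy.1 ▸ hsub
    have hint := TendstoUniformlyOn.tendsto_intervalIntegral_of_continuousOn
      (μ := MeasureTheory.volume) (.of_forall fun i => (hg i).mono hsub') (hgγ.mono hsub')
    exact tendsto_nhds_unique (hfψ y hy)
      (((hfψ a (left_mem_Icc.2 (hy.1.trans hy.2))).add hint).congr fun i => (hFTC i).symm)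
  exact (((hγ.integral_hasStrictDerivAt a x).hasDerivAt.const_add (ψ a)).hasDerivWithinAt).congr
    hψ (hψ x hx)

theorem tendstoUniformlyOn_comp_graph {ι : Type*} {l : Filter ι} {Φ : ι → ℝ × ℝ → ℝ}
    {F : ℝ × ℝ → ℝ} {f : ι → ℝ → ℝ} {ψ : ℝ → ℝ} {s : Set ℝ} (hΦ : TendstoUniformly Φ F l)
    (hF : UniformContinuous F) (hf : TendstoUniformlyOn f ψ l s) :
    TendstoUniformlyOn (fun i t => Φ i (t, f i t)) (fun t => F (t, ψ t)) l s := by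
  rw [Metric.tendstoUniformlyOn_iff] at hf ⊢
  rw [Metric.tendstoUniformly_iff] at hΦ
  intro ε hε
  obtain ⟨δ, hδ, hFδ⟩ := Metric.uniformContinuous_iff.1 hF (ε / 2) (half_pos hε)
  filter_upwards [hΦ (ε / 2) (half_pos hε), hf δ hδ] with i hΦi hfi t ht
  calc dist (F (t, ψ t)) (Φ i (t, f i t))
      ≤ dist (F (t, ψ t)) (F (t, f i t)) + dist (F (t, f i t)) (Φ i (t, f i t)) :=
        dist_triangle _ _ _
    _ < ε / 2 + ε / 2 := add_lt_add (hFδ (by simpa [Prod.dist_eq] using hfi t ht)) (hΦi _)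
    _ = ε := add_halves ε

theorem exists_hasDerivWithinAt_Icc_of_uniformContinuous {F : ℝ × ℝ → ℝ} {C T : ℝ}
    (hF : UniformContinuous F) (hC : ∀ p, |F p| ≤ C) (hT : 0 ≤ T) :
    ∃ φ : ℝ → ℝ, φ 0 = 0 ∧ ∀ x ∈ Icc 0 T,
      |φ x| ≤ C * x ∧ HasDerivWithinAt φ (F (x, φ x)) (Icc 0 T) x := by
  have hC0 : 0 ≤ C := (abs_nonneg _).trans (hC 0)
  choose f hf0 hf using fun n : ℕ => exists_hasDerivWithinAt_Icc_of_lipschitzWith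
    (continuous_infConv hC hF n) hT (abs_infConv_le hC n) (lipschitzWith_infConv hC n)
  have hlip : ∀ n, LipschitzOnWith C.toNNReal (f n) (Icc 0 T) := fun n =>
    (convex_Icc 0 T).lipschitzOnWith_of_nnnorm_hasDerivWithin_le (hf n) fun t _ => by
      rw [← NNReal.coe_le_coe, coe_nnnorm, Real.coe_toNNReal _ hC0]
      exact abs_infConv_le hC n _
  obtain ⟨ψ, hψ, hψ0, ns, hns, hconv⟩ :=
    exists_subseq_tendstoUniformlyOn_Icc_of_lipschitzOnWith hT hlip hf0
  have hΦ : TendstoUniformly (fun n => infConv F (ns n)) F atTop := fun u hu =>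
    hns.tendsto_atTop.eventually (tendstoUniformly_infConv hC hF u hu)
  refine ⟨ψ, hψ0, fun x hx => ⟨?_, ?_⟩⟩
  · simpa [hψ0, abs_of_nonneg hx.1, hC0] using hψ.dist_le_mul x 0
  · exact hasDerivWithinAt_Icc_of_tendstoUniformlyOn (fun n => hf (ns n))
      (fun n => (continuous_infConv hC hF _).comp_continuousOn
        (continuousOn_id.prodMk (hlip _).continuousOn))
      (fun y hy => hconv.tendsto_at hy) (tendstoUniformlyOn_comp_graph hΦ hF hconv)
      (hF.continuous.comp (continuous_id.prodMk hψ.continuous)) hx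

theorem exists_hasDerivWithinAt_Icc_of_continuous {F : ℝ × ℝ → ℝ} {C T : ℝ}
    (hF : Continuous F) (hC : ∀ p, |F p| ≤ C) (hT : 0 ≤ T) :
    ∃ φ : ℝ → ℝ, φ 0 = 0 ∧ ∀ x ∈ Icc 0 T,
      |φ x| ≤ C * x ∧ HasDerivWithinAt φ (F (x, φ x)) (Icc 0 T) x := by
  have hCT : -(C * T) ≤ C * T := by
    have := mul_nonneg ((abs_nonneg _).trans (hC 0)) hT
    linarith
  -- solutions stay in the compact box `[0, T] × [-CT, CT]`, where `F` is uniformly continuous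
  let r : ℝ × ℝ → Icc 0 T × Icc (-(C * T)) (C * T) := fun p =>
    (projIcc 0 T hT p.1, projIcc _ _ hCT p.2)
  have hr : UniformContinuous r :=
    ((LipschitzWith.projIcc hT).uniformContinuous.comp uniformContinuous_fst).prodMk
      ((LipschitzWith.projIcc hCT).uniformContinuous.comp uniformContinuous_snd)
  have hFr : UniformContinuous fun p => F ((r p).1, (r p).2) :=
    (CompactSpace.uniformContinuous_of_continuous
      (f := fun q : Icc 0 T × Icc (-(C * T)) (C * T) => F (q.1, q.2)) (by fun_prop)).comp hr
  obtain ⟨φ, hφ0, hφ⟩ := exists_hasDerivWithinAt_Icc_of_uniformContinuous hFr (fun _ => hC _) hT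
  refine ⟨φ, hφ0, fun x hx => ⟨(hφ x hx).1, ?_⟩⟩
  have hbox : |φ x| ≤ C * T :=
    (hφ x hx).1.trans (mul_le_mul_of_nonneg_left hx.2 ((abs_nonneg _).trans (hC 0)))
  have hrx : r (x, φ x) = (⟨x, hx⟩, ⟨φ x, abs_le.1 hbox⟩) := by
    simp only [r, projIcc_of_mem _ hx, projIcc_of_mem _ (abs_le.1 hbox)]
  simpa [hrx] using (hφ x hx).2

theorem mul_sub_le_image_sub_of_hasDerivWithinAt_Icc {f f' : ℝ → ℝ} {a b τ : ℝ}
    (hf : ∀ x ∈ Icc a b, HasDerivWithinAt f (f' x) (Icc a b) x)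
    (hτ : ∀ x ∈ Icc a b, τ ≤ f' x) {x : ℝ} (hx : x ∈ Icc a b) : τ * (x - a) ≤ f x - f a := by
  have hderiv : ∀ y ∈ interior (Icc a b), HasDerivAt f (f' y) y := fun y hy =>
    (hf y (interior_subset hy)).hasDerivAt (mem_interior_iff_mem_nhds.1 hy)
  exact (convex_Icc a b).mul_sub_le_image_sub_of_le_deriv
    (fun y hy => (hf y hy).continuousWithinAt)
    (fun y hy => (hderiv y hy).differentiableAt.differentiableWithinAt)
    (fun y hy => (hderiv y hy).deriv ▸ hτ y (interior_subset hy))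
    a (left_mem_Icc.2 (hx.1.trans hx.2)) x hx hx.1

def cone (ε h : ℝ) : Set (ℝ × ℝ) := {p | p.1 ∈ Icc 0 h ∧ |p.2| ≤ ε * p.1}

lemma isClosed_cone (ε h : ℝ) : IsClosed (cone ε h) :=
  (isClosed_Icc.preimage continuous_fst).inter
    (isClosed_le (continuous_abs.comp continuous_snd) (continuous_const.mul continuous_fst))

lemma monotone_cone (ε : ℝ) : Monotone (cone ε) :=
  fun _ _ hhc _ hp => ⟨⟨hp.1.1, hp.1.2.trans hhc⟩, hp.2⟩

lemma norm_le_of_mem_cone {ε h : ℝ} (hε : 0 ≤ ε) {p : ℝ × ℝ} (hp : p ∈ cone ε h) :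
    ‖p‖ ≤ (1 + ε) * h := by
  obtain ⟨⟨hx0, hxh⟩, hy⟩ := hp
  rw [Prod.norm_def, Real.norm_eq_abs, Real.norm_eq_abs, abs_of_nonneg hx0]
  exact max_le (by nlinarith) (by nlinarith)

lemma eventually_cone_subset {ε : ℝ} (hε : 0 ≤ ε) {U : Set (ℝ × ℝ)} (hU : U ∈ 𝓝 0) :
    ∀ᶠ h in 𝓝 0, cone ε h ⊆ U := by
  obtain ⟨r, hr, hrU⟩ := Metric.mem_nhds_iff.1 hU
  have : Tendsto (fun h : ℝ => (1 + ε) * h) (𝓝 0) (𝓝 0) := by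
    simpa using (continuous_const_mul (1 + ε)).tendsto 0
  filter_upwards [this (Iio_mem_nhds hr)] with h hh p hp
  exact hrU (mem_ball_zero_iff.2 ((norm_le_of_mem_cone hε hp).trans_lt hh))

lemma cone_subset {s : Set (ℝ × ℝ)} {bl bu : ℝ → ℝ} {ε τl τu h : ℝ} (hετu : ε < τu)
    (hετl : ε < τl) (hbu : ∀ x ∈ Ioc 0 h, τu * x ≤ bu x) (hbl : ∀ x ∈ Ioc 0 h, τl * x ≤ -bl x)
    (h0 : (0, 0) ∈ s) (hs : ∀ x y, 0 < x → x ≤ h → bl x < y → y < bu x → (x, y) ∈ s) :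
    cone ε h ⊆ s := by
  rintro ⟨x, y⟩ ⟨hx, hy⟩
  rcases hx.1.eq_or_lt with rfl | hx0
  · obtain rfl : y = 0 := abs_nonpos_iff.1 (by simpa using hy)
    exact h0
  · have hεx := abs_le.1 hy
    have hτu := mul_lt_mul_of_pos_right hετu hx0
    have hτl := mul_lt_mul_of_pos_right hετl hx0
    exact hs x y hx0 hx.2 (by linarith [hbl x ⟨hx0, hx.2⟩]) (by linarith [hbu x ⟨hx0, hx.2⟩])

theorem exists_hasDerivWithinAt_Icc_of_continuousOn_cone {f : ℝ × ℝ → ℝ} {ε h : ℝ}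
    (hε : 0 ≤ ε) (hh : 0 ≤ h) (hf : ContinuousOn f (cone ε h))
    (hfε : ∀ p ∈ cone ε h, |f p| ≤ ε) :
    ∃ φ : ℝ → ℝ, φ 0 = 0 ∧ ∀ x ∈ Icc 0 h,
      (x, φ x) ∈ cone ε h ∧ HasDerivWithinAt φ (f (x, φ x)) (Icc 0 h) x := by
  obtain ⟨F, hFε, hF⟩ := ContinuousMap.exists_restrict_eq_forall_mem_of_closed
    ⟨_, hf.domRestrict⟩ (fun p => abs_le.1 (hfε p p.2)) (nonempty_Icc.2 (by linarith))
    (isClosed_cone ε h)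
  obtain ⟨φ, hφ0, hφ⟩ :=
    exists_hasDerivWithinAt_Icc_of_continuous F.continuous (fun p => abs_le.2 (hFε p)) hh
  refine ⟨φ, hφ0, fun x hx => ?_⟩
  have hmem : (x, φ x) ∈ cone ε h := ⟨hx, (hφ x hx).1⟩
  have hFx : F (x, φ x) = f (x, φ x) := DFunLike.congr_fun hF ⟨_, hmem⟩
  exact ⟨hmem, hFx ▸ (hφ x hx).2⟩

theorem theorem1_case_B1_gt_lt_general
    (G Ghat : Set (ℝ × ℝ))
    (f₀ : ℝ × ℝ → ℝ) (hf : ContinuousOn f₀ (G ∪ Ghat))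
    (hO : ((0 : ℝ), (0 : ℝ)) ∈ Ghat) (hf0 : f₀ (0, 0) = 0)
    (a τu τl : ℝ) (hτu : 0 < τu) (hτl : 0 < τl)
    (bu bu' bl bl' : ℝ → ℝ)
    (hderivu : ∀ x ∈ Icc (0 : ℝ) a, HasDerivWithinAt bu (bu' x) (Icc (0 : ℝ) a) x)
    (hderivl : ∀ x ∈ Icc (0 : ℝ) a, HasDerivWithinAt bl (bl' x) (Icc (0 : ℝ) a) x)
    (hbu0 : bu 0 = 0) (hbl0 : bl 0 = 0)
    (hbu'τ : ∀ x ∈ Icc (0 : ℝ) a, τu ≤ bu' x)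
    (hbl'τ : ∀ x ∈ Icc (0 : ℝ) a, bl' x ≤ -τl)
    (c : ℝ) (hc : c ∈ Ioc (0 : ℝ) a)
    (hin : ∀ x y : ℝ, 0 < x → x ≤ c → bl x < y → y < bu x → (x, y) ∈ G) :
    ∃ h ∈ Ioc (0 : ℝ) c, ∃ φ : ℝ → ℝ, φ 0 = 0 ∧
      ∀ x ∈ Icc (0 : ℝ) h, (x, φ x) ∈ G ∪ Ghat ∧
        HasDerivWithinAt φ (f₀ (x, φ x)) (Icc (0 : ℝ) h) x := by
  obtain ⟨ε, hε, hετu, hετl⟩ : ∃ ε, 0 < ε ∧ ε < τu ∧ ε < τl :=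
    ⟨min τu τl / 2, by positivity, by linarith [min_le_left τu τl],
      by linarith [min_le_right τu τl]⟩
  have hIcc : Ioc 0 c ⊆ Icc 0 a := fun x hx => ⟨hx.1.le, hx.2.trans hc.2⟩
  have hbu : ∀ x ∈ Ioc 0 c, τu * x ≤ bu x := fun x hx => by
    simpa [hbu0] using mul_sub_le_image_sub_of_hasDerivWithinAt_Icc hderivu hbu'τ (hIcc hx)
  have hbl : ∀ x ∈ Ioc 0 c, τl * x ≤ -bl x := fun x hx => by
    simpa [hbl0] using mul_sub_le_image_sub_of_hasDerivWithinAt_Icc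
      (fun y hy => (hderivl y hy).neg) (fun y hy => le_neg.2 (hbl'τ y hy)) (hIcc hx)
  have hcone : cone ε c ⊆ G ∪ Ghat :=
    cone_subset hετu hετl hbu hbl (Or.inr hO) fun x y hx hxc hlo hup =>
      Or.inl (hin x y hx hxc hlo hup)
  have hsmall : ∀ᶠ p in 𝓝 0, p ∈ G ∪ Ghat → |f₀ p| ≤ ε := by
    refine eventually_nhdsWithin_iff.1 ?_
    have := (hf _ (Or.inr hO)).eventually (closedBall_mem_nhds _ hε)
    rw [hf0] at this
    simpa [Prod.mk_zero_zero] using this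
  obtain ⟨h, hsub, hh⟩ :=
    (((eventually_cone_subset hε.le hsmall).filter_mono nhdsWithin_le_nhds).and
      (Ioc_mem_nhdsGT hc.1)).exists
  have hG : cone ε h ⊆ G ∪ Ghat := (monotone_cone ε hh.2).trans hcone
  obtain ⟨φ, hφ0, hφ⟩ := exists_hasDerivWithinAt_Icc_of_continuousOn_cone hε.le hh.1.le
    (hf.mono hG) fun p hp => hsub hp (hG hp)
  exact ⟨h, hh, φ, hφ0, fun x hx => ⟨hG (hφ x hx).1, (hφ x hx).2⟩⟩

/-- Theorem 1, case B⁺₁,>,<. -/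
theorem theorem1_case_B1_gt_lt
    (G Ghat : Set (ℝ × ℝ)) (hGopen : IsOpen G) (hGhat : Ghat ⊆ frontier G)
    (f₀ : ℝ × ℝ → ℝ) (hf : ContinuousOn f₀ (G ∪ Ghat))
    (hO : ((0 : ℝ), (0 : ℝ)) ∈ Ghat) (hf0 : f₀ (0, 0) = 0)
    (a τu τl : ℝ) (ha : 0 < a) (hτu : 0 < τu) (hτl : 0 < τl)
    (bu bu' bl bl' : ℝ → ℝ)
    (hderivu : ∀ x ∈ Icc (0 : ℝ) a, HasDerivWithinAt bu (bu' x) (Icc (0 : ℝ) a) x)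
    (hbu'cont : ContinuousOn bu' (Icc (0 : ℝ) a))
    (hderivl : ∀ x ∈ Icc (0 : ℝ) a, HasDerivWithinAt bl (bl' x) (Icc (0 : ℝ) a) x)
    (hbl'cont : ContinuousOn bl' (Icc (0 : ℝ) a))
    (hbu0 : bu 0 = 0) (hbl0 : bl 0 = 0)
    (hbu'τ : ∀ x ∈ Icc (0 : ℝ) a, τu ≤ bu' x)
    (hbl'τ : ∀ x ∈ Icc (0 : ℝ) a, bl' x ≤ -τl)
    (hcurveu : ∀ x ∈ Ioc (0 : ℝ) a, (x, bu x) ∈ Ghat)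
    (hcurvel : ∀ x ∈ Ioc (0 : ℝ) a, (x, bl x) ∈ Ghat)
    (c : ℝ) (hc : c ∈ Ioc (0 : ℝ) a)
    (hin : ∀ x y : ℝ, 0 < x → x ≤ c → bl x < y → y < bu x → (x, y) ∈ G) :
    ∃ h ∈ Ioc (0 : ℝ) c, ∃ φ : ℝ → ℝ, φ 0 = 0 ∧
      ∀ x ∈ Icc (0 : ℝ) h, (x, φ x) ∈ G ∪ Ghat ∧
        HasDerivWithinAt φ (f₀ (x, φ x)) (Icc (0 : ℝ) h) x :=
  theorem1_case_B1_gt_lt_general G Ghat f₀ hf hO hf0 a τu τl hτu hτl bu bu' bl bl' hderivu hderivl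
    hbu0 hbl0 hbu'τ hbl'τ c hc hin
end

section
/- Theorem 1, case B⁺₁,₌,₌: Assume there exist a > 0 and continuously differentiable functions bᵤ, bₗ : [0,a] → ℝ with bᵤ(0) = bₗ(0) = 0, bᵤ'(0) = bₗ'(0) = 0, bᵤ convex and bₗ concave on [0,a], such that (x, bᵤ(x)) ∈ Ĝ and (x, bₗ(x)) ∈ Ĝ for every x ∈ (0,a], the boundary conditions (5⁺) hold: f₀(x, bᵤ(x)) ≤ bᵤ'(x) and f₀(x, bₗ(x)) ≥ bₗ'(x) for all x ∈ (0,a], and there exists c ∈ (0,a] such that every point (x,y) with 0 < x ≤ c and bₗ(x) < y < bᵤ(x) belongs to G. Then there exist h ∈ (0,c] and a function φ : [0,h] → ℝ with φ(0) = 0 which is a solution of y' = f₀(x,y) with graph in G̃ on [0,h]. -/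
open Set Filter Topology Function MeasureTheory
open scoped NNReal

/-!
Convexity of `bu` and concavity of `bl`, together with `bu 0 = bl 0 = 0` and `bu' 0 = bl' 0 = 0`,
give `bl ≤ bu`, so the funnel between the two curves over `[0, c]` is a compact subset of `G ∪ Ĝ`.
Composing `f₀` with the retraction of the plane onto the funnel gives a bounded continuous field on
`ℝ²`, which has a solution through the origin by Peano's theorem. The boundary conditions (5⁺) say
that the field does not point out of the funnel along its edges, so the solution stays in the
funnel, where the retracted field is `f₀` itself.
-/

section SupConv

variable {X : Type*} [PseudoMetricSpace X] {F : X → ℝ} {M : ℝ}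

/-- The sup-convolution of `F` with the cone `L * dist`: for bounded `F`, the least `L`-Lipschitz
majorant of `F`. -/
noncomputable def supConv (F : X → ℝ) (L : ℝ≥0) (p : X) : ℝ :=
  ⨆ q, (F q - L * dist p q)

lemma bddAbove_range_sub_mul_dist (hM : ∀ p, |F p| ≤ M) (L : ℝ≥0) (p : X) :
    BddAbove (range fun q => F q - L * dist p q) := by
  refine ⟨M, ?_⟩
  rintro _ ⟨q, rfl⟩
  have := (abs_le.1 (hM q)).2
  have : 0 ≤ (L : ℝ) * dist p q := by positivity
  dsimp only
  linarith

lemma le_supConv (hM : ∀ p, |F p| ≤ M) (L : ℝ≥0) (p : X) : F p ≤ supConv F L p :=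
  le_ciSup_of_le (bddAbove_range_sub_mul_dist hM L p) p (by simp)

lemma supConv_le (hM : ∀ p, |F p| ≤ M) (L : ℝ≥0) (p : X) : supConv F L p ≤ M := by
  have : Nonempty X := ⟨p⟩
  refine ciSup_le fun q => ?_
  have := (abs_le.1 (hM q)).2
  have : 0 ≤ (L : ℝ) * dist p q := by positivity
  linarith

lemma abs_supConv_le (hM : ∀ p, |F p| ≤ M) (L : ℝ≥0) (p : X) : |supConv F L p| ≤ M :=
  abs_le.2 ⟨(abs_le.1 (hM p)).1.trans (le_supConv hM L p), supConv_le hM L p⟩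

lemma supConv_anti (hM : ∀ p, |F p| ≤ M) {L L' : ℝ≥0} (hL : L ≤ L') (p : X) :
    supConv F L' p ≤ supConv F L p := by
  have : Nonempty X := ⟨p⟩
  refine ciSup_mono (bddAbove_range_sub_mul_dist hM L p) fun q => ?_
  have : (L : ℝ) * dist p q ≤ L' * dist p q := by gcongr
  linarith

lemma lipschitzWith_supConv (hM : ∀ p, |F p| ≤ M) (L : ℝ≥0) : LipschitzWith L (supConv F L) := by
  refine LipschitzWith.of_le_add_mul L fun p p' => ?_
  have : Nonempty X := ⟨p⟩
  refine ciSup_le fun q => ?_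
  have h1 : F q - L * dist p' q ≤ supConv F L p' :=
    le_ciSup (bddAbove_range_sub_mul_dist hM L p') q
  have h2 : (L : ℝ) * dist p q ≥ L * dist p' q - L * dist p p' := by
    have := dist_triangle_left p' q p
    nlinarith [L.coe_nonneg]
  linarith

lemma tendsto_supConv (hM : ∀ p, |F p| ≤ M) {q : X} (hF : ContinuousAt F q) {ι : Type*}
    {l : Filter ι} {L : ι → ℝ≥0} (hL : Tendsto L l atTop) {p : ι → X} (hp : Tendsto p l (𝓝 q)) :
    Tendsto (fun i => supConv F (L i) (p i)) l (𝓝 (F q)) := by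
  refine tendsto_order.2 ⟨fun b hb => ?_, fun b hb => ?_⟩
  · filter_upwards [(hF.tendsto.comp hp).eventually_const_lt hb] with i hi
    exact hi.trans_le (le_supConv hM _ _)
  · have hM0 : 0 ≤ M := (abs_nonneg _).trans (hM q)
    obtain ⟨δ, hδ, hFδ⟩ := Metric.continuousAt_iff.1 hF ((b - F q) / 2) (by linarith)
    filter_upwards [hp (Metric.ball_mem_nhds q (half_pos hδ)),
      hL.eventually_ge_atTop (4 * M / δ).toNNReal] with i hpi hLi
    have : Nonempty X := ⟨q⟩
    refine (ciSup_le fun y => ?_).trans_lt (by linarith : F q + (b - F q) / 2 < b)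
    rcases lt_or_ge (dist (p i) y) (δ / 2) with hy | hy
    · have hyq : dist y q < δ := by
        linarith [dist_triangle_left y q (p i), Metric.mem_ball.1 hpi]
      have := (abs_lt.1 (Real.dist_eq _ _ ▸ hFδ hyq)).2
      have : 0 ≤ (L i : ℝ) * dist (p i) y := by positivity
      linarith
    · have hLi' : 4 * M / δ ≤ L i := Real.toNNReal_le_iff_le_coe.1 hLi
      have : 2 * M ≤ L i * dist (p i) y :=
        calc 2 * M = 4 * M / δ * (δ / 2) := by field_simp; ring
          _ ≤ L i * dist (p i) y := by gcongr
      linarith [(abs_le.1 (hM y)).2, (abs_le.1 (hM q)).1]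

lemma exists_lipschitzWith_approx_from_above (hF : Continuous F) (hM : ∀ p, |F p| ≤ M) :
    ∃ w : ℕ → X → ℝ, (∀ n p, |w n p| ≤ M + 1) ∧ (∀ n : ℕ, LipschitzWith n (w n)) ∧
      (∀ n p, w (n + 1) p < w n p) ∧
      ∀ {q : X} {p : ℕ → X}, Tendsto p atTop (𝓝 q) →
        Tendsto (fun n => w n (p n)) atTop (𝓝 (F q)) := by
  refine ⟨fun n p => supConv F n p + 1 / (n + 1), fun n p => ?_, fun n => ?_, fun n p => ?_,
    fun hp => ?_⟩
  · refine (abs_add_le _ _).trans (add_le_add (abs_supConv_le hM _ _) ?_)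
    rw [abs_of_pos (by positivity)]
    exact div_le_one_of_le₀ (by simp) (by positivity)
  · simpa using (lipschitzWith_supConv hM n).add (LipschitzWith.const (1 / ((n : ℝ) + 1)))
  · exact add_lt_add_of_le_of_lt (supConv_anti hM (by simp) _)
      (one_div_lt_one_div_of_lt (by positivity) (by push_cast; linarith))
  · simpa using (tendsto_supConv hM hF.continuousAt tendsto_natCast_atTop_atTop hp).add
      tendsto_one_div_add_atTop_nhds_zero_nat

end SupConv

section Comparison

variable {f f' g g' : ℝ → ℝ} {a b : ℝ}

lemma le_of_hasDerivWithinAt_Icc_of_eq_imp_lt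
    (hf : ∀ x ∈ Icc a b, HasDerivWithinAt f (f' x) (Icc a b) x)
    (hg : ∀ x ∈ Icc a b, HasDerivWithinAt g (g' x) (Icc a b) x)
    (ha : f a ≤ g a) (bound : ∀ x ∈ Ico a b, f x = g x → f' x < g' x) :
    ∀ x ∈ Icc a b, f x ≤ g x :=
  have toIci {h h' : ℝ → ℝ} (hh : ∀ x ∈ Icc a b, HasDerivWithinAt h (h' x) (Icc a b) x)
      (x : ℝ) (hx : x ∈ Ico a b) : HasDerivWithinAt h (h' x) (Ici x) x :=
    (hh x (Ico_subset_Icc_self hx)).mono_of_mem_nhdsWithin (Icc_mem_nhdsGE_of_mem hx)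
  image_le_of_deriv_right_lt_deriv_boundary' (fun x hx => (hf x hx).continuousWithinAt)
    (toIci hf) ha (fun x hx => (hg x hx).continuousWithinAt) (toIci hg) bound

lemma le_of_hasDerivWithinAt_Icc_of_lt_imp_le
    (hf : ∀ x ∈ Icc a b, HasDerivWithinAt f (f' x) (Icc a b) x)
    (hg : ∀ x ∈ Icc a b, HasDerivWithinAt g (g' x) (Icc a b) x)
    (ha : f a ≤ g a) (bound : ∀ x ∈ Ioo a b, g x < f x → f' x ≤ g' x) :
    ∀ x ∈ Icc a b, f x ≤ g x := by
  intro x hx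
  have hε : ∀ ε > 0, f x ≤ g x + ε * (x - a + 1) := by
    intro ε hε
    have hgε : ∀ y ∈ Icc a b,
        HasDerivWithinAt (fun y => g y + ε * (y - a + 1)) (g' y + ε) (Icc a b) y := fun y hy =>
      ((hg y hy).add ((((hasDerivAt_id y).sub_const a).add_const 1).const_mul
        ε).hasDerivWithinAt).congr_deriv (by ring)
    refine le_of_hasDerivWithinAt_Icc_of_eq_imp_lt hf hgε (by linarith) (fun y hy hfg => ?_) x hx
    have hya : a < y := lt_of_le_of_ne hy.1 fun h => by subst h; simp at hfg; linarith
    linarith [bound y ⟨hya, hy.2⟩ (by nlinarith)]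
  have hlim : Tendsto (fun ε => g x + ε * (x - a + 1)) (𝓝[>] 0) (𝓝 (g x)) :=
    (Continuous.tendsto' (by fun_prop) 0 (g x) (by simp)).mono_left nhdsWithin_le_nhds
  exact ge_of_tendsto hlim (eventually_nhdsWithin_of_forall hε)

end Comparison

lemma exists_eq_forall_mem_Icc_hasDerivWithinAt_of_lipschitzWith {f : ℝ → ℝ → ℝ} {K : ℝ≥0}
    (hf : LipschitzWith K (uncurry f)) {M : ℝ} (hM : ∀ t y, |f t y| ≤ M) {t₀ t₁ : ℝ}
    (ht : t₀ ≤ t₁) (y₀ : ℝ) :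
    ∃ α : ℝ → ℝ, α t₀ = y₀ ∧
      ∀ t ∈ Icc t₀ t₁, HasDerivWithinAt α (f t (α t)) (Icc t₀ t₁) t := by
  have hM0 : 0 ≤ M := (abs_nonneg _).trans (hM 0 0)
  have hpl : IsPicardLindelof f (tmin := t₀) (tmax := t₁) ⟨t₀, left_mem_Icc.2 ht⟩ y₀
      (M * (t₁ - t₀)).toNNReal 0 M.toNNReal K :=
    { lipschitzOnWith := fun t _ => by
        have := hf.comp (LipschitzWith.prodMk_left t)
        rw [mul_one] at this
        exact this.lipschitzOnWith
      continuousOn := fun y _ =>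
        (hf.continuous.comp (continuous_id.prodMk continuous_const)).continuousOn
      norm_le := fun t _ y _ => (hM t y).trans (Real.le_coe_toNNReal M)
      mul_max_le := by
        simp [Real.coe_toNNReal _ hM0, Real.coe_toNNReal _ (mul_nonneg hM0 (sub_nonneg.2 ht)),
          ht] }
  exact hpl.exists_eq_forall_mem_Icc_hasDerivWithinAt₀

lemma hasDerivWithinAt_of_tendsto_solutions {f : ℕ → ℝ → ℝ → ℝ} {g : ℝ → ℝ → ℝ}
    {u : ℕ → ℝ → ℝ} {φ : ℝ → ℝ} {t₀ t₁ K : ℝ} (ht : t₀ ≤ t₁)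
    (hf : ∀ n, Continuous (uncurry (f n))) (hg : Continuous (uncurry g))
    (hfK : ∀ n t y, |f n t y| ≤ K)
    (hu : ∀ n, ∀ t ∈ Icc t₀ t₁, HasDerivWithinAt (u n) (f n t (u n t)) (Icc t₀ t₁) t)
    (huφ : ∀ t ∈ Icc t₀ t₁, Tendsto (fun n => u n t) atTop (𝓝 (φ t)))
    (hfg : ∀ t ∈ Icc t₀ t₁, Tendsto (fun n => f n t (u n t)) atTop (𝓝 (g t (φ t))))
    (hφ : ContinuousOn φ (Icc t₀ t₁)) :
    ∀ t ∈ Icc t₀ t₁, HasDerivWithinAt φ (g t (φ t)) (Icc t₀ t₁) t := by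
  have ht₀ : t₀ ∈ Icc t₀ t₁ := left_mem_Icc.2 ht
  have hpicard : ∀ t ∈ Icc t₀ t₁, ODE.picard g t₀ (φ t₀) φ t = φ t := by
    intro t htI
    have hsub : uIcc t₀ t ⊆ Icc t₀ t₁ := uIcc_subset_Icc ht₀ htI
    have hu_eq : ∀ n, u n t = u n t₀ + ∫ τ in t₀..t, f n τ (u n τ) := fun n =>
      (ODE.picard_eq_of_hasDerivAt (hf n).continuousOn
        (fun τ hτ => (hu n τ (hsub hτ)).mono hsub) (mapsTo_univ _ _)).symm
    have hint : Tendsto (fun n => ∫ τ in t₀..t, f n τ (u n τ)) atTop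
        (𝓝 (∫ τ in t₀..t, g τ (φ τ))) := by
      refine intervalIntegral.tendsto_integral_filter_of_dominated_convergence (fun _ => K)
        (Eventually.of_forall fun n => ?_) (Eventually.of_forall fun n => ae_of_all _
          fun τ _ => hfK n τ (u n τ)) intervalIntegrable_const
        (ae_of_all _ fun τ hτ => hfg τ (hsub (uIoc_subset_uIcc hτ)))
      exact ((ODE.continuousOn_comp (hf n).continuousOn
        (fun τ hτ => (hu n τ hτ).continuousWithinAt) (mapsTo_univ _ _)).mono
        (uIoc_subset_uIcc.trans hsub)).aestronglyMeasurable measurableSet_uIoc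
    refine tendsto_nhds_unique ?_ (huφ t htI)
    simp only [ODE.picard_apply, hu_eq]
    exact (huφ t₀ ht₀).add hint
  intro t htI
  exact (ODE.hasDerivWithinAt_picard_Icc ht₀ hg.continuousOn hφ (mapsTo_univ _ _) (φ t₀)
    htI).congr_of_mem (fun y hy => (hpicard y hy).symm) htI

/-- **Peano's existence theorem** for scalar equations. Lipschitz fields approximating `f` from
above and strictly decreasing in `n` have Picard–Lindelöf solutions which, by comparison, decrease
in `n`; their limit solves the integral equation of `f` by dominated convergence. -/
theorem exists_eq_forall_mem_Icc_hasDerivWithinAt_of_continuous {f : ℝ → ℝ → ℝ}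
    (hf : Continuous (uncurry f)) {M : ℝ} (hM : ∀ t y, |f t y| ≤ M) {t₀ t₁ : ℝ}
    (ht : t₀ ≤ t₁) (y₀ : ℝ) :
    ∃ φ : ℝ → ℝ, φ t₀ = y₀ ∧
      ∀ t ∈ Icc t₀ t₁, HasDerivWithinAt φ (f t (φ t)) (Icc t₀ t₁) t := by
  obtain ⟨w, hw_bound, hw_lip, hw_lt, hw_tendsto⟩ :=
    exists_lipschitzWith_approx_from_above hf (fun p => hM p.1 p.2)
  choose u hu₀ hu using fun n =>
    exists_eq_forall_mem_Icc_hasDerivWithinAt_of_lipschitzWith (f := curry (w n))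
      (by simpa using hw_lip n) (fun t y => hw_bound n (t, y)) ht y₀
  have hu_anti : ∀ t ∈ Icc t₀ t₁, Antitone fun n => u n t := fun t htI =>
    antitone_nat_of_succ_le fun n =>
      le_of_hasDerivWithinAt_Icc_of_eq_imp_lt (hu (n + 1)) (hu n) (by rw [hu₀, hu₀])
        (fun x _ hx => hx ▸ hw_lt n (x, u n x)) t htI
  have hu_lip : ∀ n, LipschitzOnWith (M + 1).toNNReal (u n) (Icc t₀ t₁) := fun n =>
    (convex_Icc t₀ t₁).lipschitzOnWith_of_nnnorm_hasDerivWithin_le (hu n) fun t _ => by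
      rw [← NNReal.coe_le_coe, coe_nnnorm, Real.norm_eq_abs]
      exact (hw_bound n _).trans (Real.le_coe_toNNReal _)
  have hM0 : 0 ≤ M + 1 := by linarith [(abs_nonneg _).trans (hM 0 0)]
  have hu_bdd : ∀ t ∈ Icc t₀ t₁, BddBelow (range fun n => u n t) := fun t htI => by
    refine ⟨y₀ - (M + 1) * (t - t₀), forall_mem_range.2 fun n => ?_⟩
    have := (hu_lip n).dist_le_mul t htI t₀ (left_mem_Icc.2 ht)
    rw [Real.dist_eq, Real.dist_eq, hu₀, Real.coe_toNNReal _ hM0,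
      abs_of_nonneg (sub_nonneg.2 htI.1)] at this
    linarith [neg_abs_le (u n t - y₀)]
  set φ : ℝ → ℝ := fun t => ⨅ n, u n t with hφ_def
  have hφ : ∀ t ∈ Icc t₀ t₁, Tendsto (fun n => u n t) atTop (𝓝 (φ t)) := fun t htI =>
    tendsto_atTop_ciInf (hu_anti t htI) (hu_bdd t htI)
  have hφ_lip : LipschitzOnWith (M + 1).toNNReal φ (Icc t₀ t₁) :=
    LipschitzOnWith.of_dist_le_mul fun x hx y hy =>
      le_of_tendsto' ((hφ x hx).dist (hφ y hy)) fun n => (hu_lip n).dist_le_mul x hx y hy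
  refine ⟨φ, by simp [hφ_def, hu₀], hasDerivWithinAt_of_tendsto_solutions ht
    (f := fun n => curry (w n)) (fun n => by rw [uncurry_curry]; exact (hw_lip n).continuous) hf
    (fun n t y => hw_bound n (t, y)) hu hφ (fun t htI => ?_) hφ_lip.continuousOn⟩
  exact hw_tendsto ((tendsto_const_nhds (x := t)).prodMk_nhds (hφ t htI))

lemma ConvexOn.add_mul_sub_le_of_hasDerivWithinAt {f : ℝ → ℝ} {f' a b x : ℝ}
    (hf : ConvexOn ℝ (Icc a b) f) (hd : HasDerivWithinAt f f' (Icc a b) a) (hx : x ∈ Icc a b) :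
    f a + f' * (x - a) ≤ f x := by
  rcases hx.1.eq_or_lt with rfl | hax
  · simp
  have := hf.le_slope_of_hasDerivWithinAt (left_mem_Icc.2 (hax.le.trans hx.2)) hx hax hd
  rw [slope_def_field, le_div_iff₀ (sub_pos.2 hax)] at this
  linarith

lemma ConcaveOn.le_add_mul_sub_of_hasDerivWithinAt {f : ℝ → ℝ} {f' a b x : ℝ}
    (hf : ConcaveOn ℝ (Icc a b) f) (hd : HasDerivWithinAt f f' (Icc a b) a) (hx : x ∈ Icc a b) :
    f x ≤ f a + f' * (x - a) := by
  have := hf.neg.add_mul_sub_le_of_hasDerivWithinAt hd.neg hx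
  simp only [Pi.neg_apply] at this
  linarith

lemma ConcaveOn.le_of_convexOn {l u : ℝ → ℝ} {d a b : ℝ} (hl : ConcaveOn ℝ (Icc a b) l)
    (hu : ConvexOn ℝ (Icc a b) u) (hl' : HasDerivWithinAt l d (Icc a b) a)
    (hu' : HasDerivWithinAt u d (Icc a b) a) (hlua : l a = u a) {x : ℝ} (hx : x ∈ Icc a b) :
    l x ≤ u x :=
  (hl.le_add_mul_sub_of_hasDerivWithinAt hl' hx).trans
    (hlua ▸ hu.add_mul_sub_le_of_hasDerivWithinAt hu' hx)

section Funnel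

variable {l u : ℝ → ℝ} {a b : ℝ}

def funnel (l u : ℝ → ℝ) (a b : ℝ) : Set (ℝ × ℝ) :=
  {p | p.1 ∈ Icc a b ∧ l p.1 ≤ p.2 ∧ p.2 ≤ u p.1}

noncomputable def funnelRetraction (l u : ℝ → ℝ) (a b : ℝ) (p : ℝ × ℝ) : ℝ × ℝ :=
  (max a (min b p.1), max (l (max a (min b p.1))) (min p.2 (u (max a (min b p.1)))))

lemma funnelRetraction_of_mem_Icc {x : ℝ} (hx : x ∈ Icc a b) (y : ℝ) :
    funnelRetraction l u a b (x, y) = (x, max (l x) (min y (u x))) := by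
  simp [funnelRetraction, hx.1, hx.2]

lemma funnelRetraction_eq_self {p : ℝ × ℝ} (hp : p ∈ funnel l u a b) :
    funnelRetraction l u a b p = p := by
  obtain ⟨x, y⟩ := p
  obtain ⟨hx, hly, hyu⟩ := hp
  rw [funnelRetraction_of_mem_Icc hx, min_eq_left hyu, max_eq_right hly]

lemma funnelRetraction_mem (hab : a ≤ b) (hlu : ∀ x ∈ Icc a b, l x ≤ u x) (p : ℝ × ℝ) :
    funnelRetraction l u a b p ∈ funnel l u a b := by
  have hx : max a (min b p.1) ∈ Icc a b := ⟨le_max_left _ _, max_le hab (min_le_left _ _)⟩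
  exact ⟨hx, le_max_left _ _, max_le (hlu _ hx) (min_le_right _ _)⟩

lemma continuous_funnelRetraction (hab : a ≤ b) (hl : ContinuousOn l (Icc a b))
    (hu : ContinuousOn u (Icc a b)) : Continuous (funnelRetraction l u a b) := by
  have hclamp : Continuous fun x : ℝ => max a (min b x) := by fun_prop
  have hmaps : ∀ x : ℝ, max a (min b x) ∈ Icc a b :=
    fun x => ⟨le_max_left _ _, max_le hab (min_le_left _ _)⟩
  have hl' := hl.comp_continuous hclamp hmaps
  have hu' := hu.comp_continuous hclamp hmaps
  exact (hclamp.comp continuous_fst).prodMk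
    ((hl'.comp continuous_fst).max (continuous_snd.min (hu'.comp continuous_fst)))

lemma isCompact_funnel (hab : a ≤ b) (hl : ContinuousOn l (Icc a b))
    (hu : ContinuousOn u (Icc a b)) (hlu : ∀ x ∈ Icc a b, l x ≤ u x) :
    IsCompact (funnel l u a b) := by
  obtain ⟨m, hm⟩ := isCompact_Icc.bddBelow_image hl
  obtain ⟨M, hM⟩ := isCompact_Icc.bddAbove_image hu
  have hfix : funnel l u a b = {p | funnelRetraction l u a b p = p} :=
    Subset.antisymm (fun p hp => funnelRetraction_eq_self hp)
      fun p (hp : _ = p) => hp ▸ funnelRetraction_mem hab hlu p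
  refine ((isCompact_Icc (a := a) (b := b)).prod
    (isCompact_Icc (a := m) (b := M))).of_isClosed_subset ?_ ?_
  · rw [hfix]
    exact isClosed_eq (continuous_funnelRetraction hab hl hu) continuous_id
  · rintro ⟨x, y⟩ ⟨hx, hly, hyu⟩
    exact ⟨hx, (hm (mem_image_of_mem l hx)).trans hly, hyu.trans (hM (mem_image_of_mem u hx))⟩

theorem exists_hasDerivWithinAt_funnelRetraction {F : ℝ × ℝ → ℝ} (hab : a ≤ b)
    (hl : ContinuousOn l (Icc a b)) (hu : ContinuousOn u (Icc a b))
    (hlu : ∀ x ∈ Icc a b, l x ≤ u x) (hF : ContinuousOn F (funnel l u a b)) (y₀ : ℝ) :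
    ∃ φ : ℝ → ℝ, φ a = y₀ ∧ ∀ x ∈ Icc a b,
      HasDerivWithinAt φ (F (funnelRetraction l u a b (x, φ x))) (Icc a b) x := by
  have hπ := funnelRetraction_mem hab hlu
  obtain ⟨M, hM⟩ := (isCompact_funnel hab hl hu hlu).exists_bound_of_continuousOn hF
  exact exists_eq_forall_mem_Icc_hasDerivWithinAt_of_continuous
    (f := curry (F ∘ funnelRetraction l u a b))
    (by rw [uncurry_curry]; exact hF.comp_continuous (continuous_funnelRetraction hab hl hu) hπ)
    (fun t y => by simpa using hM _ (hπ (t, y))) hab y₀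

theorem mem_funnel_of_hasDerivWithinAt {F : ℝ × ℝ → ℝ} {l' u' φ : ℝ → ℝ}
    (hl : ∀ x ∈ Icc a b, HasDerivWithinAt l (l' x) (Icc a b) x)
    (hu : ∀ x ∈ Icc a b, HasDerivWithinAt u (u' x) (Icc a b) x)
    (hlu : ∀ x ∈ Icc a b, l x ≤ u x)
    (hFl : ∀ x ∈ Ioo a b, l' x ≤ F (x, l x)) (hFu : ∀ x ∈ Ioo a b, F (x, u x) ≤ u' x)
    (hφ : ∀ x ∈ Icc a b,
      HasDerivWithinAt φ (F (funnelRetraction l u a b (x, φ x))) (Icc a b) x)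
    (hla : l a ≤ φ a) (hua : φ a ≤ u a) :
    ∀ x ∈ Icc a b, (x, φ x) ∈ funnel l u a b := by
  refine fun x hx => ⟨hx, le_of_hasDerivWithinAt_Icc_of_lt_imp_le hl hφ hla ?_ x hx,
    le_of_hasDerivWithinAt_Icc_of_lt_imp_le hφ hu hua ?_ x hx⟩
  · intro y hy hφy
    have hy' := Ioo_subset_Icc_self hy
    rw [funnelRetraction_of_mem_Icc hy', min_eq_left (hφy.le.trans (hlu y hy')),
      max_eq_left hφy.le]
    exact hFl y hy
  · intro y hy hφy
    have hy' := Ioo_subset_Icc_self hy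
    rw [funnelRetraction_of_mem_Icc hy', min_eq_right hφy.le, max_eq_right (hlu y hy')]
    exact hFu y hy

end Funnel

lemma funnel_subset_union {S T : Set (ℝ × ℝ)} {l u : ℝ → ℝ} {c : ℝ}
    (h0 : ((0 : ℝ), (0 : ℝ)) ∈ T) (hl0 : l 0 = 0) (hu0 : u 0 = 0)
    (hl : ∀ x ∈ Ioc 0 c, (x, l x) ∈ T) (hu : ∀ x ∈ Ioc 0 c, (x, u x) ∈ T)
    (hin : ∀ x y : ℝ, 0 < x → x ≤ c → l x < y → y < u x → (x, y) ∈ S) :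
    funnel l u 0 c ⊆ S ∪ T := by
  rintro ⟨x, y⟩ ⟨⟨hx0, hxc⟩, hly, hyu⟩
  dsimp only at hx0 hxc hly hyu
  rcases hx0.eq_or_lt with rfl | hx0
  · obtain rfl : y = 0 := by rw [hl0] at hly; rw [hu0] at hyu; exact le_antisymm hyu hly
    exact Or.inr h0
  rcases hyu.eq_or_lt with hyu | hyu
  · exact Or.inr (hyu ▸ hu x ⟨hx0, hxc⟩)
  rcases hly.eq_or_lt with hly | hly
  · exact Or.inr (hly ▸ hl x ⟨hx0, hxc⟩)
  exact Or.inl (hin x y hx0 hxc hly hyu)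

theorem theorem1_case_B1_eq_eq_general
    (G Ghat : Set (ℝ × ℝ))
    (f₀ : ℝ × ℝ → ℝ) (hf : ContinuousOn f₀ (G ∪ Ghat))
    (hO : ((0 : ℝ), (0 : ℝ)) ∈ Ghat)
    (a : ℝ)
    (bu bu' bl bl' : ℝ → ℝ)
    (hderivu : ∀ x ∈ Icc (0 : ℝ) a, HasDerivWithinAt bu (bu' x) (Icc (0 : ℝ) a) x)
    (hderivl : ∀ x ∈ Icc (0 : ℝ) a, HasDerivWithinAt bl (bl' x) (Icc (0 : ℝ) a) x)
    (hbu0 : bu 0 = 0) (hbl0 : bl 0 = 0)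
    (hbu'0 : bu' 0 = 0) (hbl'0 : bl' 0 = 0)
    (hconv : ConvexOn ℝ (Icc (0 : ℝ) a) bu)
    (hconc : ConcaveOn ℝ (Icc (0 : ℝ) a) bl)
    (hcurveu : ∀ x ∈ Ioc (0 : ℝ) a, (x, bu x) ∈ Ghat)
    (hcurvel : ∀ x ∈ Ioc (0 : ℝ) a, (x, bl x) ∈ Ghat)
    (hbcu : ∀ x ∈ Ioc (0 : ℝ) a, f₀ (x, bu x) ≤ bu' x)
    (hbcl : ∀ x ∈ Ioc (0 : ℝ) a, bl' x ≤ f₀ (x, bl x))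
    (c : ℝ) (hc : c ∈ Ioc (0 : ℝ) a)
    (hin : ∀ x y : ℝ, 0 < x → x ≤ c → bl x < y → y < bu x → (x, y) ∈ G) :
    ∃ h ∈ Ioc (0 : ℝ) c, ∃ φ : ℝ → ℝ, φ 0 = 0 ∧
      ∀ x ∈ Icc (0 : ℝ) h, (x, φ x) ∈ G ∪ Ghat ∧
        HasDerivWithinAt φ (f₀ (x, φ x)) (Icc (0 : ℝ) h) x := by
  obtain ⟨hc0, hca⟩ := hc
  have h0a : (0 : ℝ) ∈ Icc 0 a := left_mem_Icc.2 (hc0.le.trans hca)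
  have hsub : Icc 0 c ⊆ Icc 0 a := Icc_subset_Icc_right hca
  have hIoc : ∀ x ∈ Ioc 0 c, x ∈ Ioc 0 a := fun x hx => ⟨hx.1, hx.2.trans hca⟩
  have hbu : ∀ x ∈ Icc 0 c, HasDerivWithinAt bu (bu' x) (Icc 0 c) x :=
    fun x hx => (hderivu x (hsub hx)).mono hsub
  have hbl : ∀ x ∈ Icc 0 c, HasDerivWithinAt bl (bl' x) (Icc 0 c) x :=
    fun x hx => (hderivl x (hsub hx)).mono hsub
  have hlu : ∀ x ∈ Icc 0 c, bl x ≤ bu x := fun x hx =>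
    hconc.le_of_convexOn hconv ((hderivl 0 h0a).congr_deriv hbl'0)
      ((hderivu 0 h0a).congr_deriv hbu'0) (hbl0.trans hbu0.symm) (hsub hx)
  have hK : funnel bl bu 0 c ⊆ G ∪ Ghat := funnel_subset_union hO hbl0 hbu0
    (fun x hx => hcurvel x (hIoc x hx)) (fun x hx => hcurveu x (hIoc x hx)) hin
  obtain ⟨φ, hφ0, hφ⟩ := exists_hasDerivWithinAt_funnelRetraction hc0.le
    (fun x hx => (hbl x hx).continuousWithinAt) (fun x hx => (hbu x hx).continuousWithinAt) hlu
    (hf.mono hK) 0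
  have hφK := mem_funnel_of_hasDerivWithinAt hbl hbu hlu
    (fun x hx => hbcl x (hIoc x (Ioo_subset_Ioc_self hx)))
    (fun x hx => hbcu x (hIoc x (Ioo_subset_Ioc_self hx))) hφ (by rw [hφ0, hbl0])
    (by rw [hφ0, hbu0])
  refine ⟨c, ⟨hc0, le_rfl⟩, φ, hφ0, fun x hx => ⟨hK (hφK x hx), ?_⟩⟩
  simpa [funnelRetraction_eq_self (hφK x hx)] using hφ x hx

/-- Theorem 1, case B⁺₁,₌,₌. -/
theorem theorem1_case_B1_eq_eq
    (G Ghat : Set (ℝ × ℝ)) (hGopen : IsOpen G) (hGhat : Ghat ⊆ frontier G)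
    (f₀ : ℝ × ℝ → ℝ) (hf : ContinuousOn f₀ (G ∪ Ghat))
    (hO : ((0 : ℝ), (0 : ℝ)) ∈ Ghat) (hf0 : f₀ (0, 0) = 0)
    (a : ℝ) (ha : 0 < a)
    (bu bu' bl bl' : ℝ → ℝ)
    (hderivu : ∀ x ∈ Icc (0 : ℝ) a, HasDerivWithinAt bu (bu' x) (Icc (0 : ℝ) a) x)
    (hbu'cont : ContinuousOn bu' (Icc (0 : ℝ) a))
    (hderivl : ∀ x ∈ Icc (0 : ℝ) a, HasDerivWithinAt bl (bl' x) (Icc (0 : ℝ) a) x)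
    (hbl'cont : ContinuousOn bl' (Icc (0 : ℝ) a))
    (hbu0 : bu 0 = 0) (hbl0 : bl 0 = 0)
    (hbu'0 : bu' 0 = 0) (hbl'0 : bl' 0 = 0)
    (hconv : ConvexOn ℝ (Icc (0 : ℝ) a) bu)
    (hconc : ConcaveOn ℝ (Icc (0 : ℝ) a) bl)
    (hcurveu : ∀ x ∈ Ioc (0 : ℝ) a, (x, bu x) ∈ Ghat)
    (hcurvel : ∀ x ∈ Ioc (0 : ℝ) a, (x, bl x) ∈ Ghat)
    (hbcu : ∀ x ∈ Ioc (0 : ℝ) a, f₀ (x, bu x) ≤ bu' x)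
    (hbcl : ∀ x ∈ Ioc (0 : ℝ) a, bl' x ≤ f₀ (x, bl x))
    (c : ℝ) (hc : c ∈ Ioc (0 : ℝ) a)
    (hin : ∀ x y : ℝ, 0 < x → x ≤ c → bl x < y → y < bu x → (x, y) ∈ G) :
    ∃ h ∈ Ioc (0 : ℝ) c, ∃ φ : ℝ → ℝ, φ 0 = 0 ∧
      ∀ x ∈ Icc (0 : ℝ) h, (x, φ x) ∈ G ∪ Ghat ∧
        HasDerivWithinAt φ (f₀ (x, φ x)) (Icc (0 : ℝ) h) x :=
  theorem1_case_B1_eq_eq_general G Ghat f₀ hf hO a bu bu' bl bl' hderivu hderivl hbu0 hbl0 hbu'0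
    hbl'0 hconv hconc hcurveu hcurvel hbcu hbcl c hc hin
end
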